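/- arXiv:2412.12078 — 10 statements merged into one kernel-verified Lean document; each statement's English description precedes it below -/
import Mathlib

section
/- Let Φ : F → M be a surjective map of commutative monoids with F free of finite rank, let R ⊆ F × F be the kernel congruence, and let ⪯ be a total monoidal well-order on F. Let in(R) ⊆ F be the set of elements max(a,b) over pairs (a,b) ∈ R with a ≠ b. Then Φ restricted to F \ in(R) is a bijection onto M; in particular, every congruence class of R contains a unique ⪯-minimal element, which lies in F \ in(R). -/
/-- Macaulay's lemma for monoids: Let `Φ : ℕⁿ → M` be a surjective monoid
map with kernel congruence `R`, and let `lt` be (the strict part of) a total monoidal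
well-order on `ℕⁿ`.  Let `in(R)` be the set of initial (i.e. larger) terms of non-diagonal
pairs in `R`.  Then `Φ` restricted to the complement of `in(R)` is a bijection onto `M`;
in particular each congruence class of `R` contains a unique `⪯`-minimal element, which
lies outside `in(R)`. -/
theorem macaulay_for_monoids (n : ℕ) (M : Type*) [AddCommMonoid M]
    (Φ : (Fin n → ℕ) →+ M) (hsurj : Function.Surjective Φ)
    (lt : (Fin n → ℕ) → (Fin n → ℕ) → Prop)
    (hwo : IsWellOrder (Fin n → ℕ) lt)
    (hmon : ∀ a b c : Fin n → ℕ, lt a b → lt (a + c) (b + c)) :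
    Function.Bijective
        (fun x : {b : Fin n → ℕ // ¬∃ a, lt a b ∧ Φ a = Φ b} => Φ x.1) ∧
      ∀ m : M, ∃! a : Fin n → ℕ, Φ a = m ∧ (¬∃ a', lt a' a ∧ Φ a' = Φ a) ∧
        ∀ b, Φ b = m → b ≠ a → lt a b := by
  have htri : ∀ x y : Fin n → ℕ, lt x y ∨ x = y ∨ lt y x := fun x y =>
    trichotomous_of lt x y
  have wf : WellFounded lt := hwo.toIsWellFounded.wf
  constructor
  · constructor
    · rintro ⟨x, hx⟩ ⟨y, hy⟩ h
      simp only at h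
      apply Subtype.ext
      rcases htri x y with hlt | heq | hlt
      · exact absurd ⟨x, hlt, h⟩ hy
      · exact heq
      · exact absurd ⟨y, hlt, h.symm⟩ hx
    · intro m
      obtain ⟨a, ha⟩ := hsurj m
      obtain ⟨b, hb, hmin⟩ := wf.has_min {x | Φ x = m} ⟨a, ha⟩
      refine ⟨⟨b, ?_⟩, hb⟩
      rintro ⟨c, hc, hcb⟩
      exact hmin c (hcb.trans hb) hc
  · intro m
    obtain ⟨a, ha⟩ := hsurj m
    obtain ⟨b, hb, hmin⟩ := wf.has_min {x | Φ x = m} ⟨a, ha⟩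
    refine ⟨b, ⟨hb, ?_, ?_⟩, ?_⟩
    · rintro ⟨c, hc, hcb⟩
      exact hmin c (hcb.trans hb) hc
    · intro c hc hne
      rcases htri b c with h | h | h
      · exact h
      · exact absurd h.symm hne
      · exact absurd h (hmin c hc)
    · rintro c ⟨hc, hcmin, _⟩
      rcases htri c b with h | h | h
      · exact absurd h (hmin c hc)
      · exact h
      · exact absurd ⟨b, h, hb.trans hc.symm⟩ hcmin
end

section
/- With notation as in Macaulay's lemma for monoids: every element a of F can be rewritten to its R-normal form using rules from any Gröbner basis B; consequently, a Gröbner basis for M generates the congruence R (its symmetric, transitive, monoidal closure is R). -/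
/-! A rewrite step with a rule of `B` stays in the `R`-class and strictly decreases the element,
and by the Gröbner condition every element that is not the `⪯`-least of its class is divisible
by the leading term of some rule, so it can be rewritten. Well-foundedness of `⪯` then makes
every element rewrite to the normal form of its class. Hence two `R`-equivalent elements rewrite
to a common element, so they are related by the congruence generated by `B`; conversely that
congruence lies in `R` because every rule of `B` does. -/

namespace GroebnerBasis

open Relation

variable {F M : Type*} [AddCommMonoid F] [AddCommMonoid M]

def Rewrites (B : Set (F × F)) (x y : F) : Prop :=
  ∃ p ∈ B, ∃ d, x = p.1 + d ∧ y = p.2 + d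

def IsNormalForm (Φ : F →+ M) (lt : F → F → Prop) (b : F) : Prop :=
  ¬∃ a, lt a b ∧ Φ a = Φ b

theorem exists_isNormalForm (Φ : F →+ M) (lt : F → F → Prop) [IsWellFounded F lt] (a : F) :
    ∃ m, Φ m = Φ a ∧ IsNormalForm Φ lt m := by
  obtain ⟨m, hm, hmin⟩ := (IsWellFounded.wf (r := lt)).has_min {x | Φ x = Φ a} ⟨a, rfl⟩
  exact ⟨m, hm, fun ⟨a', hlt, ha'⟩ => hmin a' (ha'.trans hm) hlt⟩

theorem addConGen_of_reflTransGen_rewrites {B : Set (F × F)} {x y : F}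
    (h : ReflTransGen (Rewrites B) x y) : addConGen (fun x y => (x, y) ∈ B) x y := by
  induction h with
  | refl => exact (addConGen _).refl _
  | tail _ hstep ih =>
    obtain ⟨p, hp, d, rfl, rfl⟩ := hstep
    exact (addConGen _).trans ih
      ((addConGen _).add (AddConGen.Rel.of _ _ hp) ((addConGen _).refl d))

theorem map_eq_of_addConGen (Φ : F →+ M) {B : Set (F × F)} (hB : ∀ p ∈ B, Φ p.1 = Φ p.2)
    {a b : F} (h : addConGen (fun x y => (x, y) ∈ B) a b) : Φ a = Φ b :=
  (AddCon.ker_rel Φ).1 <|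
    AddCon.addConGen_le.2 (fun x y hxy => (AddCon.ker_rel Φ).2 (hB (x, y) hxy)) h

section Rewriting

variable {Φ : F →+ M} {lt : F → F → Prop} {B : Set (F × F)}

theorem exists_rewrites_of_not_isNormalForm (hmon : ∀ a b c : F, lt a b → lt (a + c) (b + c))
    (hB : ∀ p ∈ B, Φ p.1 = Φ p.2 ∧ lt p.2 p.1)
    (hin : ∀ x, (∃ a, lt a x ∧ Φ a = Φ x) → ∃ p ∈ B, ∃ f, x = p.1 + f)
    {x : F} (hx : ¬IsNormalForm Φ lt x) : ∃ y, Rewrites B x y ∧ lt y x ∧ Φ y = Φ x := by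
  obtain ⟨p, hp, f, rfl⟩ := hin x (not_not.1 hx)
  obtain ⟨hΦp, hltp⟩ := hB p hp
  exact ⟨p.2 + f, ⟨p, hp, f, rfl, rfl⟩, hmon _ _ _ hltp, by rw [map_add, map_add, hΦp]⟩

theorem reflTransGen_rewrites_of_isNormalForm [IsWellOrder F lt]
    (hmon : ∀ a b c : F, lt a b → lt (a + c) (b + c))
    (hB : ∀ p ∈ B, Φ p.1 = Φ p.2 ∧ lt p.2 p.1)
    (hin : ∀ x, (∃ a, lt a x ∧ Φ a = Φ x) → ∃ p ∈ B, ∃ f, x = p.1 + f)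
    (a b : F) (hb : Φ b = Φ a) (hnf : IsNormalForm Φ lt b) :
    ReflTransGen (Rewrites B) a b := by
  induction a using IsWellFounded.induction lt with
  | _ a ih =>
    rcases trichotomous_of lt a b with hab | rfl | hba
    · exact absurd ⟨a, hab, hb.symm⟩ hnf
    · exact ReflTransGen.refl
    · have ha : ¬IsNormalForm Φ lt a := fun h => h ⟨b, hba, hb⟩
      obtain ⟨y, hstep, hlt, hy⟩ := exists_rewrites_of_not_isNormalForm hmon hB hin ha
      exact ReflTransGen.head hstep (ih y hlt (hb.trans hy.symm))

end Rewriting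

end GroebnerBasis

open GroebnerBasis in
theorem groebner_basis_generates_congruence_general (n : ℕ) (M : Type*) [AddCommMonoid M]
    (Φ : (Fin n → ℕ) →+ M)
    (lt : (Fin n → ℕ) → (Fin n → ℕ) → Prop)
    (hwo : IsWellOrder (Fin n → ℕ) lt)
    (hmon : ∀ a b c : Fin n → ℕ, lt a b → lt (a + c) (b + c))
    (B : Finset ((Fin n → ℕ) × (Fin n → ℕ)))
    (hB : ∀ p ∈ B, Φ p.1 = Φ p.2 ∧ lt p.2 p.1)
    -- Gröbner condition: `in(R) = in(B) + F`
    (hGB : {x : Fin n → ℕ | ∃ a, lt a x ∧ Φ a = Φ x} =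
      {x : Fin n → ℕ | ∃ p ∈ B, ∃ f, x = p.1 + f}) :
    (∀ a b : Fin n → ℕ, Φ b = Φ a → (¬∃ a', lt a' b ∧ Φ a' = Φ b) →
      Relation.ReflTransGen
        (fun x y : Fin n → ℕ => ∃ p ∈ B, ∃ d, x = p.1 + d ∧ y = p.2 + d) a b) ∧
    (∀ a b : Fin n → ℕ,
      addConGen (fun x y : Fin n → ℕ => (x, y) ∈ B) a b ↔ Φ a = Φ b) := by
  have rewrites_to_normalForm : ∀ a b, Φ b = Φ a → IsNormalForm Φ lt b →
      Relation.ReflTransGen (Rewrites (B : Set _)) a b :=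
    reflTransGen_rewrites_of_isNormalForm hmon hB (fun x hx => hGB.subset hx)
  refine ⟨rewrites_to_normalForm,
    fun a b => ⟨map_eq_of_addConGen Φ (B := (B : Set _)) fun p hp => (hB p hp).1, fun hab => ?_⟩⟩
  obtain ⟨m, hm, hnf⟩ := exists_isNormalForm Φ lt a
  have ham := addConGen_of_reflTransGen_rewrites (rewrites_to_normalForm a m hm hnf)
  have hbm := addConGen_of_reflTransGen_rewrites (rewrites_to_normalForm b m (hm.trans hab) hnf)
  exact (addConGen _).trans ham ((addConGen _).symm hbm)

/-- Setup as in Macaulay's lemma: `Φ : ℕⁿ → M` surjective with kernel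
congruence `R`, `lt` a total monoidal well-order.  Let `B` be a Gröbner basis for `M`:
a finite set of pairs `(a, b)` with `Φ a = Φ b` and `b ≺ a`, whose initial terms generate
the ideal `in(R)` of `ℕⁿ`.  Then every element can be rewritten (by the reflexive
transitive closure of one-step rewriting with rules of `B`) to its `R`-normal form;
consequently the smallest additive congruence containing `B` is `R` itself. -/
theorem groebner_basis_generates_congruence (n : ℕ) (M : Type*) [AddCommMonoid M]
    (Φ : (Fin n → ℕ) →+ M) (hsurj : Function.Surjective Φ)
    (lt : (Fin n → ℕ) → (Fin n → ℕ) → Prop)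
    (hwo : IsWellOrder (Fin n → ℕ) lt)
    (hmon : ∀ a b c : Fin n → ℕ, lt a b → lt (a + c) (b + c))
    (B : Finset ((Fin n → ℕ) × (Fin n → ℕ)))
    (hB : ∀ p ∈ B, Φ p.1 = Φ p.2 ∧ lt p.2 p.1)
    -- Gröbner condition: `in(R) = in(B) + F`
    (hGB : {x : Fin n → ℕ | ∃ a, lt a x ∧ Φ a = Φ x} =
      {x : Fin n → ℕ | ∃ p ∈ B, ∃ f, x = p.1 + f}) :
    (∀ a b : Fin n → ℕ, Φ b = Φ a → (¬∃ a', lt a' b ∧ Φ a' = Φ b) →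
      Relation.ReflTransGen
        (fun x y : Fin n → ℕ => ∃ p ∈ B, ∃ d, x = p.1 + d ∧ y = p.2 + d) a b) ∧
    (∀ a b : Fin n → ℕ,
      addConGen (fun x y : Fin n → ℕ => (x, y) ∈ B) a b ↔ Φ a = Φ b) :=
  groebner_basis_generates_congruence_general n M Φ lt hwo hmon B hB hGB
end

section
/- Let Φ : F → M be a surjective monoid map with F free of finite rank, R its kernel congruence, and ⪯ a monoidal well-order. Let {a_i} be the minimal generating set of the ideal in(R) of F, and for each i let b_i be the R-normal form of a_i. Then B = {(a_i, b_i)} is the unique reduced Gröbner basis for M with respect to ⪯. -/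
/-! In `ℕⁿ`, `a` divides `b` (`b = a + f` for some `f`) exactly when `a ≤ b` componentwise.
This order is a well-quasi-order (Dickson's lemma), so the minimal elements of the monoid ideal
`in(R)` are finitely many and generate it. A monoidal well-order `⪯` extends `≤`, so `in(R)` is
upward closed and the normal form of `x` is the unique element of its class outside `in(R)`.

In a reduced Gröbner basis `B`, reducedness forces every leading term to be a minimal generator
of `in(R)`, and every trailing term to lie outside `in(R)` (its own leading term cannot divide
it, as `⪯` extends `≤`), hence to be the normal form of its leading term. Each minimal generator
leads some element of `B`, so `B` is determined; conversely, the pairs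
(minimal generator, normal form) form a reduced Gröbner basis. -/

namespace Stmt8

variable {n : ℕ} {M : Type*} [AddCommMonoid M]

/-- The set of initial terms of the kernel congruence of `Φ`: elements that are the
larger member of a non-diagonal related pair. -/
def inR (Φ : (Fin n → ℕ) →+ M) (lt : (Fin n → ℕ) → (Fin n → ℕ) → Prop) :
    Set (Fin n → ℕ) :=
  {x | ∃ a, lt a x ∧ Φ a = Φ x}

/-- `b` is the `R`-normal form of `x`: the `⪯`-minimal element of the congruence class. -/
def IsNormalForm (Φ : (Fin n → ℕ) →+ M) (lt : (Fin n → ℕ) → (Fin n → ℕ) → Prop)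
    (x b : Fin n → ℕ) : Prop :=
  Φ b = Φ x ∧ ∀ c, Φ c = Φ x → c ≠ b → lt b c

/-- `B` is a Gröbner basis for `M` w.r.t. `lt`. -/
def IsGroebner (Φ : (Fin n → ℕ) →+ M) (lt : (Fin n → ℕ) → (Fin n → ℕ) → Prop)
    (B : Set ((Fin n → ℕ) × (Fin n → ℕ))) : Prop :=
  B.Finite ∧ (∀ p ∈ B, Φ p.1 = Φ p.2 ∧ lt p.2 p.1) ∧
    inR Φ lt = {x | ∃ p ∈ B, ∃ f, x = p.1 + f}

/-- `B` is a reduced Gröbner basis: no term of any other element of `B` lies in the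
monoid ideal generated by the initial term of an element of `B`. -/
def IsReducedGroebner (Φ : (Fin n → ℕ) →+ M) (lt : (Fin n → ℕ) → (Fin n → ℕ) → Prop)
    (B : Set ((Fin n → ℕ) × (Fin n → ℕ))) : Prop :=
  IsGroebner Φ lt B ∧ ∀ p ∈ B, ∀ q ∈ B, q ≠ p →
    (¬∃ f, q.1 = p.1 + f) ∧ (¬∃ f, q.2 = p.1 + f)

theorem finite_setOf_minimal {α : Type*} [PartialOrder α] [WellQuasiOrderedLE α] (s : Set α) :
    {x | Minimal (· ∈ s) x}.Finite :=
  (setOfPred_minimal_antichain _).finite_of_partiallyWellOrderedOn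
    (Set.isPWO_of_wellQuasiOrderedLE _)

theorem minimal_mem_iff_not_exists_add {α : Type*} [AddCommMonoid α] [PartialOrder α]
    [CanonicallyOrderedAdd α] [AddLeftStrictMono α] {s : Set α} {a : α} :
    Minimal (· ∈ s) a ↔ a ∈ s ∧ ¬∃ t ∈ s, ∃ f, f ≠ 0 ∧ a = t + f := by
  rw [minimal_iff_forall_lt]
  refine and_congr_right fun _ => ⟨?_, ?_⟩
  · rintro h ⟨t, ht, f, hf, rfl⟩
    exact h (lt_iff_exists_add.2 ⟨f, pos_iff_ne_zero.2 hf, rfl⟩) ht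
  · intro h t hta ht
    obtain ⟨f, hf, rfl⟩ := lt_iff_exists_add.1 hta
    exact h ⟨t, ht, f, hf.ne', rfl⟩

def IsMonoidal {α : Type*} [Add α] (lt : α → α → Prop) : Prop :=
  ∀ a b c : α, lt a b → lt (a + c) (b + c)

theorem IsMonoidal.not_lt_zero {α : Type*} [AddMonoid α] {lt : α → α → Prop}
    [IsWellFounded α lt] (hmon : IsMonoidal lt) (x : α) : ¬lt x 0 := by
  intro hx
  have hdesc : ∀ k : ℕ, lt ((k + 1) • x) (k • x) := fun k => by
    simpa [succ_nsmul'] using hmon x 0 (k • x) hx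
  obtain ⟨k, hk⟩ := WellFounded.not_rel_apply_succ (r := lt) (fun k => k • x)
  exact hk (hdesc k)

theorem IsMonoidal.not_lt_of_le {α : Type*} [AddCommMonoid α] [PartialOrder α]
    [CanonicallyOrderedAdd α] {lt : α → α → Prop} [IsWellOrder α lt]
    (hmon : IsMonoidal lt) {a b : α} (hab : a ≤ b) : ¬lt b a := by
  obtain ⟨f, rfl⟩ := le_iff_exists_add.1 hab
  rcases trichotomous_of lt 0 f with h | rfl | h
  · have h' := hmon 0 f a h
    rw [zero_add, add_comm] at h'
    exact asymm h'
  · rw [add_zero]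
    exact irrefl a
  · exact absurd h (hmon.not_lt_zero f)

section GroebnerBasis

variable {Φ : (Fin n → ℕ) →+ M} {lt : (Fin n → ℕ) → (Fin n → ℕ) → Prop}
  {B : Set ((Fin n → ℕ) × (Fin n → ℕ))} {p : (Fin n → ℕ) × (Fin n → ℕ)} {x b b' : Fin n → ℕ}

theorem isUpperSet_inR (hmon : IsMonoidal lt) : IsUpperSet (inR Φ lt) := by
  rintro x y hxy ⟨a, hax, ha⟩
  obtain ⟨f, rfl⟩ := le_iff_exists_add.1 hxy
  exact ⟨a + f, hmon a x f hax, by rw [map_add, map_add, ha]⟩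

theorem IsGroebner.mem_inR_iff (hB : IsGroebner Φ lt B) : x ∈ inR Φ lt ↔ ∃ p ∈ B, p.1 ≤ x := by
  simp only [hB.2.2, Set.mem_ofPred_eq, le_iff_exists_add]

theorem IsReducedGroebner.minimal_fst (hB : IsReducedGroebner Φ lt B) (hp : p ∈ B) :
    Minimal (· ∈ inR Φ lt) p.1 := by
  refine ⟨hB.1.mem_inR_iff.2 ⟨p, hp, le_rfl⟩, fun s hs hsp => ?_⟩
  obtain ⟨q, hq, hqs⟩ := hB.1.mem_inR_iff.1 hs
  obtain rfl | hpq := eq_or_ne p q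
  · exact hqs
  · exact absurd (le_iff_exists_add.1 (hqs.trans hsp)) (hB.2 q hq p hp hpq).1

variable (Φ lt) in
def reducedGroebnerBasis : Set ((Fin n → ℕ) × (Fin n → ℕ)) :=
  {p | Minimal (· ∈ inR Φ lt) p.1 ∧ IsNormalForm Φ lt p.1 p.2}

variable [IsWellOrder (Fin n → ℕ) lt]

theorem isNormalForm_iff : IsNormalForm Φ lt x b ↔ Φ b = Φ x ∧ b ∉ inR Φ lt := by
  refine ⟨fun h => ⟨h.1, fun ⟨c, hcb, hc⟩ => ?_⟩, fun ⟨hb, hbR⟩ => ⟨hb, fun c hc hcb => ?_⟩⟩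
  · exact asymm hcb (h.2 c (hc.trans h.1) (ne_of_irrefl hcb))
  · rcases trichotomous_of lt b c with h | rfl | h
    · exact h
    · exact absurd rfl hcb
    · exact absurd ⟨c, h, hc.trans hb.symm⟩ hbR

theorem exists_isNormalForm (x : Fin n → ℕ) : ∃ b, IsNormalForm Φ lt x b := by
  obtain ⟨b, hb, hmin⟩ := (IsWellFounded.wf (r := lt)).has_min {c | Φ c = Φ x} ⟨x, rfl⟩
  exact ⟨b, isNormalForm_iff.2 ⟨hb, fun ⟨c, hcb, hc⟩ => hmin c (hc.trans hb) hcb⟩⟩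

theorem IsNormalForm.unique (h : IsNormalForm Φ lt x b) (h' : IsNormalForm Φ lt x b') :
    b = b' := by
  by_contra hne
  exact asymm (h.2 b' h'.1 (Ne.symm hne)) (h'.2 b h.1 hne)

theorem IsNormalForm.lt_of_mem_inR (h : IsNormalForm Φ lt x b) (hx : x ∈ inR Φ lt) : lt b x :=
  h.2 x rfl fun hxb => (isNormalForm_iff.1 h).2 (hxb ▸ hx)

theorem IsReducedGroebner.isNormalForm (hmon : IsMonoidal lt) (hB : IsReducedGroebner Φ lt B)
    (hp : p ∈ B) : IsNormalForm Φ lt p.1 p.2 := by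
  obtain ⟨hΦ, hlt⟩ := hB.1.2.1 p hp
  refine isNormalForm_iff.2 ⟨hΦ.symm, fun h2 => ?_⟩
  obtain ⟨q, hq, hq2⟩ := hB.1.mem_inR_iff.1 h2
  obtain rfl | hpq := eq_or_ne p q
  · exact hmon.not_lt_of_le hq2 hlt
  · exact (hB.2 q hq p hp hpq).2 (le_iff_exists_add.1 hq2)

theorem IsReducedGroebner.eq_reducedGroebnerBasis (hmon : IsMonoidal lt)
    (hB : IsReducedGroebner Φ lt B) : B = reducedGroebnerBasis Φ lt := by
  ext p
  refine ⟨fun hp => ⟨hB.minimal_fst hp, hB.isNormalForm hmon hp⟩, fun ⟨hmin, hnf⟩ => ?_⟩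
  obtain ⟨q, hq, hqp⟩ := hB.1.mem_inR_iff.1 hmin.1
  have h1 : q.1 = p.1 := le_antisymm hqp (hmin.2 (hB.minimal_fst hq).1 hqp)
  have h2 : q.2 = p.2 := (hB.isNormalForm hmon hq).unique (h1 ▸ hnf)
  rwa [← Prod.ext h1 h2]

theorem isGroebner_reducedGroebnerBasis (hmon : IsMonoidal lt) :
    IsGroebner Φ lt (reducedGroebnerBasis Φ lt) := by
  choose N hN using exists_isNormalForm (Φ := Φ) (lt := lt)
  refine ⟨?_, fun p ⟨hmin, hnf⟩ => ⟨hnf.1.symm, hnf.lt_of_mem_inR hmin.1⟩, ?_⟩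
  · refine ((finite_setOf_minimal (inR Φ lt)).image fun a => (a, N a)).subset ?_
    rintro p ⟨hmin, hnf⟩
    exact ⟨p.1, hmin, Prod.ext rfl ((hN p.1).unique hnf)⟩
  · ext x
    simp only [Set.mem_ofPred_eq, ← le_iff_exists_add]
    refine ⟨fun hx => ?_, fun ⟨p, ⟨hmin, _⟩, hpx⟩ => isUpperSet_inR hmon hpx hmin.1⟩
    obtain ⟨a, hax, ha⟩ := (Set.isPWO_of_wellQuasiOrderedLE _).exists_le_minimal hx
    exact ⟨(a, N a), ⟨ha, hN a⟩, hax⟩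

theorem isReducedGroebner_reducedGroebnerBasis (hmon : IsMonoidal lt) :
    IsReducedGroebner Φ lt (reducedGroebnerBasis Φ lt) := by
  refine ⟨isGroebner_reducedGroebnerBasis hmon,
    fun p ⟨hpmin, hpnf⟩ q ⟨hqmin, hqnf⟩ hqp => ⟨?_, ?_⟩⟩ <;> rw [← le_iff_exists_add]
  · intro hpq
    have h1 : q.1 = p.1 := le_antisymm (hqmin.2 hpmin.1 hpq) hpq
    exact hqp (Prod.ext h1 (hqnf.unique (h1 ▸ hpnf)))
  · exact fun hpq => (isNormalForm_iff.1 hqnf).2 (isUpperSet_inR hmon hpq hpmin.1)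

end GroebnerBasis

theorem reduced_groebner_basis_unique_general
    (Φ : (Fin n → ℕ) →+ M)
    (lt : (Fin n → ℕ) → (Fin n → ℕ) → Prop)
    (hwo : IsWellOrder (Fin n → ℕ) lt)
    (hmon : ∀ a b c : Fin n → ℕ, lt a b → lt (a + c) (b + c)) :
    ∀ B : Set ((Fin n → ℕ) × (Fin n → ℕ)),
      IsReducedGroebner Φ lt B ↔
        B = {p | (p.1 ∈ inR Φ lt ∧ ¬∃ s ∈ inR Φ lt, ∃ f, f ≠ 0 ∧ p.1 = s + f) ∧
              IsNormalForm Φ lt p.1 p.2} := by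
  simp_rw [← minimal_mem_iff_not_exists_add]
  intro B
  constructor
  · exact IsReducedGroebner.eq_reducedGroebnerBasis hmon
  · rintro rfl
    exact isReducedGroebner_reducedGroebnerBasis hmon

/-- Let `Φ : ℕⁿ → M` be surjective with kernel congruence `R`, `lt` a total
monoidal well-order.  Let `A` be the minimal generating set of the ideal `in(R)` (its
elements not of the form `s + f` with `s ∈ in(R)`, `f ≠ 0`), and pair each `a ∈ A` with
its `R`-normal form.  The resulting set is the unique reduced Gröbner basis for `M`. -/
theorem reduced_groebner_basis_unique
    (Φ : (Fin n → ℕ) →+ M) (hsurj : Function.Surjective Φ)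
    (lt : (Fin n → ℕ) → (Fin n → ℕ) → Prop)
    (hwo : IsWellOrder (Fin n → ℕ) lt)
    (hmon : ∀ a b c : Fin n → ℕ, lt a b → lt (a + c) (b + c)) :
    ∀ B : Set ((Fin n → ℕ) × (Fin n → ℕ)),
      IsReducedGroebner Φ lt B ↔
        B = {p | (p.1 ∈ inR Φ lt ∧ ¬∃ s ∈ inR Φ lt, ∃ f, f ≠ 0 ∧ p.1 = s + f) ∧
              IsNormalForm Φ lt p.1 p.2} :=
  reduced_groebner_basis_unique_general Φ lt hwo hmon

end Stmt8
end

section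
/- Buchberger's criterion for monoid congruences: let B = {(a_i, b_i)} be a finite set of rules in F × F with a_i ≻ b_i, generating the congruence R. Suppose that for all i, j the S-pair relation (b_i + (a_i ∨ a_j) − a_i, b_j + (a_i ∨ a_j) − a_j) can be rewritten to a trivial relation (equal components) by repeatedly applying rules of B to its terms. Then B is a Gröbner basis for R, i.e., the initial terms a_i generate the ideal in(R) of F. -/
/-!
Rewriting by the rules of `B` strictly decreases terms, so it terminates, and the S-pair
hypothesis makes it locally confluent: when two rules apply to `x`, both rewrites factor through
the least common multiple `p.1 ⊔ q.1 ≤ x` of the two leading terms, where they are joined by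
hypothesis. By Newman's lemma rewriting is confluent, so joinability is a congruence and contains
`R`. Hence if `(x, b) ∈ R` with `b ≺ x`, then `x` and `b` rewrite to a common term; were `x`
irreducible, `b` would rewrite to `x`, forcing `x ⪯ b`. So some leading term divides `x`.
-/

open Relation

namespace Relation

variable {α : Type*} {r : α → α → Prop}

theorem church_rosser_of_wellFounded (hwf : WellFounded (flip r))
    (h : ∀ a b c, r a b → r a c → Join (ReflTransGen r) b c) {a b c : α}
    (hab : ReflTransGen r a b) (hac : ReflTransGen r a c) : Join (ReflTransGen r) b c := by
  induction a using hwf.induction generalizing b c with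
  | _ a ih =>
    rcases hab.cases_head with rfl | ⟨b₁, hab₁, hb₁b⟩
    · exact ⟨c, hac, .refl⟩
    rcases hac.cases_head with rfl | ⟨c₁, hac₁, hc₁c⟩
    · exact ⟨b, .refl, hab⟩
    obtain ⟨d, hb₁d, hc₁d⟩ := h a b₁ c₁ hab₁ hac₁
    obtain ⟨e, hbe, hde⟩ := ih b₁ hab₁ hb₁b hb₁d
    obtain ⟨f, hef, hcf⟩ := ih c₁ hac₁ (hc₁d.trans hde) hc₁c
    exact ⟨f, hbe.trans hef, hcf⟩

end Relation

namespace AddRewriting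

variable {M : Type*}

def RewriteStep [Add M] (B : Set (M × M)) (x y : M) : Prop :=
  ∃ r ∈ B, ∃ d, x = r.1 + d ∧ y = r.2 + d

theorem eq_of_reflTransGen_rewriteStep [Add M] {B : Set (M × M)} {x y : M}
    (hx : ∀ p ∈ B, ∀ f, x ≠ p.1 + f) (h : ReflTransGen (RewriteStep B) x y) : y = x := by
  rcases h.cases_head with rfl | ⟨z, ⟨p, hp, f, hxf, _⟩, _⟩
  · rfl
  · exact absurd hxf (hx p hp f)

section AddCommMonoid

variable [AddCommMonoid M] {B : Set (M × M)}

theorem RewriteStep.of_mem {u v : M} (h : (u, v) ∈ B) : RewriteStep B u v :=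
  ⟨(u, v), h, 0, (add_zero u).symm, (add_zero v).symm⟩

theorem RewriteStep.add_right {x y : M} (h : RewriteStep B x y) (e : M) :
    RewriteStep B (x + e) (y + e) := by
  obtain ⟨r, hr, d, rfl, rfl⟩ := h
  exact ⟨r, hr, d + e, add_assoc .., add_assoc ..⟩

theorem reflTransGen_rewriteStep_add_right {x y : M} (h : ReflTransGen (RewriteStep B) x y)
    (e : M) : ReflTransGen (RewriteStep B) (x + e) (y + e) :=
  h.lift (· + e) fun _ _ h ↦ h.add_right e

theorem reflTransGen_rewriteStep_add {x y u v : M} (hxy : ReflTransGen (RewriteStep B) x y)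
    (huv : ReflTransGen (RewriteStep B) u v) :
    ReflTransGen (RewriteStep B) (x + u) (y + v) := by
  have hu : ReflTransGen (RewriteStep B) (u + y) (v + y) :=
    reflTransGen_rewriteStep_add_right huv y
  rw [add_comm u, add_comm v] at hu
  exact (reflTransGen_rewriteStep_add_right hxy u).trans hu

def joinAddCon (hconf : ∀ a b c, ReflTransGen (RewriteStep B) a b →
      ReflTransGen (RewriteStep B) a c → Join (ReflTransGen (RewriteStep B)) b c) :
    AddCon M where
  r := Join (ReflTransGen (RewriteStep B))
  iseqv := equivalence_join hconf
  add' := fun ⟨w, hxw, hyw⟩ ⟨w', huw', hvw'⟩ ↦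
    ⟨w + w', reflTransGen_rewriteStep_add hxw huw', reflTransGen_rewriteStep_add hyw hvw'⟩

theorem addConGen_le_joinAddCon (hconf : ∀ a b c, ReflTransGen (RewriteStep B) a b →
      ReflTransGen (RewriteStep B) a c → Join (ReflTransGen (RewriteStep B)) b c) :
    addConGen (fun u v ↦ (u, v) ∈ B) ≤ joinAddCon hconf :=
  AddCon.addConGen_le.mpr fun _ v huv ↦ ⟨v, .single (.of_mem huv), .refl⟩

end AddCommMonoid

theorem rewriteStep_locally_join [AddCommMonoid M] [Lattice M] [CanonicallyOrderedAdd M]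
    [Sub M] [OrderedSub M] [IsLeftCancelAdd M] {B : Set (M × M)}
    (hS : ∀ p ∈ B, ∀ q ∈ B,
      Join (ReflTransGen (RewriteStep B)) (p.2 + (p.1 ⊔ q.1 - p.1)) (q.2 + (p.1 ⊔ q.1 - q.1)))
    (x y z : M) (hy : RewriteStep B x y) (hz : RewriteStep B x z) :
    Join (ReflTransGen (RewriteStep B)) y z := by
  obtain ⟨p, hp, d, hxp, rfl⟩ := hy
  obtain ⟨q, hq, d', hxq, rfl⟩ := hz
  have hsup : p.1 ⊔ q.1 ≤ x := sup_le (hxp ▸ le_self_add) (hxq ▸ le_self_add)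
  have hcofactor : ∀ a, a ≤ p.1 ⊔ q.1 → ∀ f, x = a + f → f = (p.1 ⊔ q.1 - a) + (x - p.1 ⊔ q.1) :=
    fun a ha f hx ↦ add_left_cancel (a := a) <| by
      rw [← hx, ← add_assoc, add_tsub_cancel_of_le ha, add_tsub_cancel_of_le hsup]
  obtain ⟨c, hpc, hqc⟩ := hS p hp q hq
  refine ⟨c + (x - p.1 ⊔ q.1), ?_, ?_⟩
  · rw [hcofactor p.1 le_sup_left d hxp, ← add_assoc]
    exact reflTransGen_rewriteStep_add_right hpc _
  · rw [hcofactor q.1 le_sup_right d' hxq, ← add_assoc]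
    exact reflTransGen_rewriteStep_add_right hqc _

end AddRewriting

open AddRewriting

/-- Buchberger's criterion for monoid congruences: Let `B` be a finite set
of rules `(aᵢ, bᵢ)` in `ℕⁿ × ℕⁿ` with `aᵢ ≻ bᵢ`, and let `R` be the congruence it
generates.  Suppose every S-pair relation
`(bᵢ + (aᵢ ∨ aⱼ) − aᵢ, bⱼ + (aᵢ ∨ aⱼ) − aⱼ)` (where `∨` is the coordinatewise max) can be
rewritten to a trivial relation by repeatedly applying rules of `B` to its terms.  Then
`B` is a Gröbner basis for `R`: the initial terms `aᵢ` generate the ideal `in(R)`. -/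
theorem buchberger_criterion (n : ℕ)
    (lt : (Fin n → ℕ) → (Fin n → ℕ) → Prop)
    (hwo : IsWellOrder (Fin n → ℕ) lt)
    (hmon : ∀ a b c : Fin n → ℕ, lt a b → lt (a + c) (b + c))
    (B : Finset ((Fin n → ℕ) × (Fin n → ℕ)))
    (hB : ∀ p ∈ B, lt p.2 p.1)
    (hSpairs : ∀ p ∈ B, ∀ q ∈ B, ∃ c : Fin n → ℕ,
      Relation.ReflTransGen
        (fun x y : Fin n → ℕ => ∃ r ∈ B, ∃ d, x = r.1 + d ∧ y = r.2 + d)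
        (p.2 + ((p.1 ⊔ q.1) - p.1)) c ∧
      Relation.ReflTransGen
        (fun x y : Fin n → ℕ => ∃ r ∈ B, ∃ d, x = r.1 + d ∧ y = r.2 + d)
        (q.2 + ((p.1 ⊔ q.1) - q.1)) c) :
    ∀ x : Fin n → ℕ,
      (∃ b, lt b x ∧ addConGen (fun u v : Fin n → ℕ => (u, v) ∈ B) x b) →
      ∃ p ∈ B, ∃ f, x = p.1 + f := by
  rintro x ⟨b, hbx, hxb⟩
  have := hwo
  have hdecr : ∀ u v, RewriteStep (B : Set _) v u → lt u v := by
    rintro _ _ ⟨r, hr, d, rfl, rfl⟩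
    exact hmon _ _ _ (hB r hr)
  obtain ⟨c, hxc, hbc⟩ := addConGen_le_joinAddCon (fun _ _ _ ↦
    church_rosser_of_wellFounded (hwo.wf.mono hdecr) (rewriteStep_locally_join hSpairs)) hxb
  by_contra! hirr
  rw [eq_of_reflTransGen_rewriteStep hirr hxc] at hbc
  rcases reflTransGen_iff_eq_or_transGen.mp hbc with rfl | hbx'
  · exact irrefl x hbx
  · have hxb' : lt x b := by
      simpa only [transGen_eq_self] using TransGen.mono hdecr _ _ (TransGen.swap _ _ hbx')
    exact asymm hbx hxb'
end

section
/- Elimination lemma for monoid Gröbner bases: write F = F₀ ⊕ ℕt for a basis element t, and assume the monomial order satisfies t ≻ f for all f ∈ F₀. If B is a Gröbner basis for a congruence R on F, then B ∩ (F₀ × F₀) is a Gröbner basis for the restricted congruence R ∩ (F₀ × F₀) on F₀. -/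
/-!
In a monoidal well-order no element exceeds its own translates, so `(g, 0) ≼ (g, 0) + (a₁, k)`,
and translating `(g, 0) ≺ t` by `(a₁, k)` shows that every `a = (a₁, k + 1)` involving `t`
dominates all of `F₀`. Hence `F₀` is an order ideal: an element of `B` whose leading term lies
in `F₀` has its trailing term in `F₀` as well. An initial term `(x, 0)` of `c` is a translate
`p.1 + f` with `p ∈ B`, which forces `p.1, f ∈ F₀` and therefore `p ∈ B ∩ (F₀ × F₀)`;
conversely translates of such `p` by elements of `F₀` stay inside `F₀`.
-/

theorem not_lt_add_self_of_wellFounded {M : Type*} [Add M] (lt : M → M → Prop)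
    (hwf : WellFounded lt)
    (hmon : ∀ a b c : M, lt a b → lt (a + c) (b + c)) (a d : M) : ¬ lt (a + d) a := by
  induction a using hwf.induction with
  | _ a ih => exact fun h => ih (a + d) h (hmon _ _ d h)

section MonoidalWellOrder

variable {M : Type*} [AddZeroClass M] {lt : M × ℕ → M × ℕ → Prop} [IsWellOrder (M × ℕ) lt]

theorem lt_of_snd_ne_zero (hmon : ∀ a b c : M × ℕ, lt a b → lt (a + c) (b + c))
    (htop : ∀ m : M, lt (m, 0) (0, 1)) (g : M) {a : M × ℕ} (ha : a.2 ≠ 0) : lt (g, 0) a := by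
  obtain ⟨k, hk⟩ := Nat.exists_eq_succ_of_ne_zero ha
  have htop_add : lt ((g, 0) + (a.1, k)) a := by
    convert hmon _ _ (a.1, k) (htop g) using 1
    ext <;> simp [hk, Nat.add_comm]
  rcases trichotomous_of lt (g, 0) ((g, 0) + (a.1, k)) with h | h | h
  · exact _root_.trans h htop_add
  · rwa [h]
  · exact absurd h (not_lt_add_self_of_wellFounded lt IsWellFounded.wf hmon _ _)

theorem snd_eq_zero_of_lt (hmon : ∀ a b c : M × ℕ, lt a b → lt (a + c) (b + c))
    (htop : ∀ m : M, lt (m, 0) (0, 1)) {a b : M × ℕ} (hba : lt b a) (ha : a.2 = 0) : b.2 = 0 := by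
  by_contra hb
  obtain ⟨a₁, a₂⟩ := a
  subst ha
  exact asymm hba (lt_of_snd_ne_zero hmon htop a₁ hb)

end MonoidalWellOrder

/-- Eliminating a variable: Write `F = F₀ ⊕ ℕt`, modelled as
`F = (Fin n → ℕ) × ℕ` with `F₀` the elements with vanishing `t`-coordinate and
`t = (0, 1)`.  Let `lt` be a total monoidal well-order on `F` with `t ≻ f` for all
`f ∈ F₀`, let `c` be a congruence on `F` and `B` a Gröbner basis for `c`.  Then
`B₀ = B ∩ (F₀ × F₀)` is a Gröbner basis for the restricted congruence `c ∩ (F₀ × F₀)`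
on `F₀`: the initial terms of the restricted congruence are exactly the translates of
initial terms of elements of `B₀`. -/
theorem eliminate_a_variable (n : ℕ)
    (lt : ((Fin n → ℕ) × ℕ) → ((Fin n → ℕ) × ℕ) → Prop)
    (hwo : IsWellOrder ((Fin n → ℕ) × ℕ) lt)
    (hmon : ∀ a b c : (Fin n → ℕ) × ℕ, lt a b → lt (a + c) (b + c))
    (htop : ∀ f : Fin n → ℕ, lt (f, 0) ((0 : Fin n → ℕ), 1))
    (c : AddCon ((Fin n → ℕ) × ℕ))
    (B : Finset (((Fin n → ℕ) × ℕ) × ((Fin n → ℕ) × ℕ)))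
    (hB : ∀ p ∈ B, c p.1 p.2 ∧ lt p.2 p.1)
    (hGB : {x : (Fin n → ℕ) × ℕ | ∃ y, lt y x ∧ c x y} =
      {x : (Fin n → ℕ) × ℕ | ∃ p ∈ B, ∃ f, x = p.1 + f}) :
    {x : Fin n → ℕ | ∃ y : Fin n → ℕ, lt (y, 0) (x, 0) ∧ c (x, 0) (y, 0)} =
      {x : Fin n → ℕ | ∃ p ∈ B, p.1.2 = 0 ∧ p.2.2 = 0 ∧
        ∃ f : Fin n → ℕ, (x, (0 : ℕ)) = p.1 + (f, 0)} := by
  ext x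
  constructor
  · rintro ⟨y, hyx, hxy⟩
    have hx : ((x, 0) : (Fin n → ℕ) × ℕ) ∈ {x | ∃ y, lt y x ∧ c x y} := ⟨(y, 0), hyx, hxy⟩
    rw [hGB] at hx
    obtain ⟨p, hpB, f, hxf⟩ := hx
    obtain ⟨hp, hf⟩ : p.1.2 = 0 ∧ f.2 = 0 := Nat.add_eq_zero_iff.mp (congrArg Prod.snd hxf).symm
    refine ⟨p, hpB, hp, snd_eq_zero_of_lt hmon htop (hB p hpB).2 hp, f.1, ?_⟩
    rw [hxf, ← hf]
  · rintro ⟨p, hpB, -, hp, f, hxf⟩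
    have htrans : p.2 + (f, 0) = (p.2.1 + f, 0) := Prod.ext rfl (by simp [hp])
    refine ⟨p.2.1 + f, ?_, ?_⟩
    · simpa only [htrans, ← hxf] using hmon _ _ (f, 0) (hB p hpB).2
    · simpa only [htrans, ← hxf] using c.add (hB p hpB).1 (c.refl (f, 0))
end

section
/- Let F be a free commutative monoid of finite rank, R ⊆ F × F a congruence, and x ∈ F. Set F' = F ⊕ ℕt and let R' be the congruence on F' generated by R and the pair (t + x, 0). Then (R : x^∞) = R' ∩ (F × F), where (R : x^∞) = {(a,b) ∈ F × F : ∃ n ≥ 1, (a + n·x, b + n·x) ∈ R}. -/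
/-!
In `F × ℕ` the generator `(x, 1) ~ 0` makes `t` an additive inverse of `x`, so `(u, i)`
behaves like `u - i • x`. Accordingly, setting `(u, i) ~ (v, j)` iff `u + (j + n) • x` and
`v + (i + n) • x` are `R`-related for some `n` gives a congruence containing the generators,
and on `F × {0}` it is exactly the saturation `(R : x^∞)`. Conversely,
`(u + n • x, n) ~ (u, 0)` in `R'`, so every pair of the saturation lies in `R'`.
-/

namespace AddCon

variable {M : Type*} [AddCommMonoid M]

/-- The congruence on `M × ℕ` in which the second factor acts as `-x`. -/
def adjoinNeg (R : AddCon M) (x : M) : AddCon (M × ℕ) where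
  r u v := ∃ n : ℕ, R (u.1 + (v.2 + n) • x) (v.1 + (u.2 + n) • x)
  iseqv :=
    { refl u := ⟨0, R.refl _⟩
      symm := fun ⟨n, h⟩ => ⟨n, R.symm h⟩
      trans := by
        rintro ⟨u, i⟩ ⟨v, j⟩ ⟨w, l⟩ ⟨n, huv⟩ ⟨m, hvw⟩
        refine ⟨j + n + m, ?_⟩
        have h₁ := R.add huv (R.refl ((l + m) • x))
        have h₂ := R.add hvw (R.refl ((i + n) • x))
        rw [add_right_comm v] at h₂
        convert R.trans h₁ h₂ using 1 <;> (simp only [add_smul]; abel) }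
  add' := by
    rintro ⟨u, i⟩ ⟨v, j⟩ ⟨u', i'⟩ ⟨v', j'⟩ ⟨n, h⟩ ⟨n', h'⟩
    refine ⟨n + n', ?_⟩
    convert R.add h h' using 1 <;> simp only [Prod.fst_add, Prod.snd_add, add_smul] <;> abel

theorem adjoinNeg_apply (R : AddCon M) (x : M) (u v : M × ℕ) :
    adjoinNeg R x u v ↔ ∃ n : ℕ, R (u.1 + (v.2 + n) • x) (v.1 + (u.2 + n) • x) :=
  Iff.rfl

theorem adjoinNeg_iff (R : AddCon M) (x : M) (a b : M) :
    adjoinNeg R x (a, 0) (b, 0) ↔ ∃ n : ℕ, R (a + n • x) (b + n • x) := by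
  simp only [adjoinNeg_apply, zero_add]

theorem exists_one_le_nsmul_of_exists_nsmul {R : AddCon M} {x a b : M}
    (h : ∃ n : ℕ, R (a + n • x) (b + n • x)) : ∃ n : ℕ, 1 ≤ n ∧ R (a + n • x) (b + n • x) := by
  obtain ⟨n, hn⟩ := h
  refine ⟨n + 1, Nat.le_add_left 1 n, ?_⟩
  simpa only [succ_nsmul, add_assoc] using R.add hn (R.refl x)

theorem add_nsmul_rel_of_rel_neg {c : AddCon (M × ℕ)} {x : M} (hx : c (x, 1) 0) (u : M) (n : ℕ) :
    c (u + n • x, n) (u, 0) := by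
  simpa using c.add (c.refl (u, 0)) (c.nsmul n hx)

end AddCon

open AddCon

/-- Let `F = ℕᵏ`, `R` a congruence on `F`, and `x ∈ F`.  Let
`F' = F ⊕ ℕt = ℕᵏ × ℕ` and let `R'` be the congruence on `F'` generated by (the image of)
`R` and the pair `(t + x, 0)`.  Then the saturation
`(R : x^∞) = {(a,b) : ∃ n ≥ 1, (a + n·x, b + n·x) ∈ R}` equals `R' ∩ (F × F)`. -/
theorem saturation_eq_elimination (k : ℕ) (R : AddCon (Fin k → ℕ)) (x : Fin k → ℕ) :
    ∀ a b : Fin k → ℕ,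
      (∃ n : ℕ, 1 ≤ n ∧ R (a + n • x) (b + n • x)) ↔
      addConGen (fun u v : (Fin k → ℕ) × ℕ =>
          (∃ s t : Fin k → ℕ, u = (s, 0) ∧ v = (t, 0) ∧ R s t) ∨
          (u = (x, 1) ∧ v = 0))
        (a, 0) (b, 0) := by
  intro a b
  set R' := addConGen fun u v : (Fin k → ℕ) × ℕ =>
    (∃ s t : Fin k → ℕ, u = (s, 0) ∧ v = (t, 0) ∧ R s t) ∨ (u = (x, 1) ∧ v = 0)
  have hR : ∀ s t, R s t → R' (s, 0) (t, 0) := fun s t h =>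
    AddConGen.Rel.of _ _ (Or.inl ⟨s, t, rfl, rfl, h⟩)
  have hx : R' (x, 1) 0 := AddConGen.Rel.of _ _ (Or.inr ⟨rfl, rfl⟩)
  have hle : R' ≤ adjoinNeg R x := addConGen_le.mpr <| by
    rintro _ _ (⟨s, t, rfl, rfl, h⟩ | ⟨rfl, rfl⟩)
    · exact (adjoinNeg_iff R x s t).mpr ⟨0, by simpa using h⟩
    · exact (adjoinNeg_apply R x _ _).mpr ⟨0, by simpa using R.refl x⟩
  constructor
  · rintro ⟨n, -, h⟩
    have hmid : R' (a + n • x, n) (b + n • x, n) := by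
      simpa using R'.add (hR _ _ h) (R'.refl (0, n))
    exact ((add_nsmul_rel_of_rel_neg hx a n).symm.trans hmid).trans
      (add_nsmul_rel_of_rel_neg hx b n)
  · exact fun h => exists_one_le_nsmul_of_exists_nsmul ((adjoinNeg_iff R x a b).mp (hle h))
end

section
/- Let F be a free commutative monoid of finite rank, R a congruence with quotient M = F/R, and x ∈ F an element mapping to the interior of M (i.e., x lies in no proper face of M). Then the quotient of F by the congruence (R : x^∞) is the integralization M^int of M, i.e., the image of M in its groupification. -/
/-- Let `Φ : F = ℕᵏ → M` be a surjective monoid map with kernel congruence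
`R`, and let `x ∈ F` map to the interior of `M` (i.e. `Φ x` lies in no proper face of
`M`).  Then `F/(R : x^∞)` is the integralization `M^int = M/∼` where `a ∼ b` iff
`a + c = b + c` for some `c ∈ M`: two elements of `F` are `(R : x^∞)`-related iff their
images in `M` become equal in `M^int`. -/
theorem quotient_by_saturation_is_integralization (k : ℕ) (M : Type*) [AddCommMonoid M]
    (Φ : (Fin k → ℕ) →+ M) (hsurj : Function.Surjective Φ) (x : Fin k → ℕ)
    (hint : ∀ S : AddSubmonoid M, (∀ a b : M, a + b ∈ S → a ∈ S ∧ b ∈ S) →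
      Φ x ∈ S → S = ⊤) :
    ∀ a b : Fin k → ℕ,
      (∃ n : ℕ, Φ (a + n • x) = Φ (b + n • x)) ↔ (∃ c : M, Φ a + c = Φ b + c) := by
  intro a b
  constructor
  · rintro ⟨n, hn⟩
    rw [map_add, map_add, map_nsmul] at hn
    exact ⟨n • Φ x, hn⟩
  · rintro ⟨c, hc⟩
    -- the face of elements dividing a multiple of Φ x
    set S : AddSubmonoid M :=
      { carrier := {m | ∃ (n : ℕ) (d : M), m + d = n • Φ x}
        zero_mem' := ⟨0, 0, by simp⟩
        add_mem' := by
          rintro m₁ m₂ ⟨n₁, d₁, h₁⟩ ⟨n₂, d₂, h₂⟩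
          exact ⟨n₁ + n₂, d₁ + d₂, by
            rw [add_smul, ← h₁, ← h₂]; abel⟩ } with hS
    have hface : ∀ a b : M, a + b ∈ S → a ∈ S ∧ b ∈ S := by
      rintro u v ⟨n, d, h⟩
      exact ⟨⟨n, v + d, by rw [← h]; abel⟩, ⟨n, u + d, by rw [← h]; abel⟩⟩
    have hx : Φ x ∈ S := ⟨1, 0, by simp⟩
    have hcS : c ∈ S := by rw [hint S hface hx]; trivial
    obtain ⟨n, d, hd⟩ := hcS
    refine ⟨n, ?_⟩
    have : Φ a + (c + d) = Φ b + (c + d) := by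
      rw [← add_assoc, ← add_assoc, hc]
    rw [hd] at this
    rw [map_add, map_add, map_nsmul]
    exact this
end

section
/- Let M be a commutative monoid and x ∈ M an element lying in the interior of M (not contained in any proper face). Then the localization M[−x] (the universal monoid in which x becomes invertible) is the groupification M^gp of M. -/
/-- Let `M` be a commutative monoid and `x ∈ M` an element of the interior
of `M` (contained in no proper face).  Then the localization `M[−x]` coincides with the
groupification `M^gp`: any map `γ : M → G` to an abelian group having the universal
property of the groupification also has the universal property of the localization at
`x`, i.e. every monoid hom `f : M → N` making `f x` invertible factors uniquely
through `γ`. -/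
theorem localization_at_interior_is_groupification (M : Type*) [AddCommMonoid M]
    (x : M)
    (hint : ∀ S : AddSubmonoid M, (∀ a b : M, a + b ∈ S → a ∈ S ∧ b ∈ S) →
      x ∈ S → S = ⊤)
    (G : Type*) [AddCommGroup G] (γ : M →+ G)
    (hgp : ∀ (H : Type) [AddCommGroup H], ∀ f : M →+ H, ∃! g : G →+ H, g.comp γ = f) :
    ∀ (N : Type) [AddCommMonoid N], ∀ f : M →+ N, IsAddUnit (f x) →
      ∃! h : G →+ N, h.comp γ = f := by
  intro N _ f hfx
  -- The set of elements of `M` whose image under `f` is an additive unit is a face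
  -- containing `x`, hence is everything.
  set S : AddSubmonoid M :=
    { carrier := {a | IsAddUnit (f a)}
      zero_mem' := by simp
      add_mem' := fun ha hb => by simpa using ha.add hb } with hSdef
  have hface : ∀ a b : M, a + b ∈ S → a ∈ S ∧ b ∈ S := by
    intro a b hab
    have hab' : IsAddUnit (f a + f b) := by
      have : IsAddUnit (f (a + b)) := hab
      simpa using this
    exact ⟨isAddUnit_of_add_isAddUnit_left hab', isAddUnit_of_add_isAddUnit_right hab'⟩
  have hStop : S = ⊤ := hint S hface hfx
  have hS : ∀ a : M, IsAddUnit (f a) := fun a =>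
    show a ∈ S from hStop ▸ AddSubmonoid.mem_top a
  -- lift `f` to the group of additive units of `N`
  let F : M →+ AddUnits N :=
    { toFun := fun a => (hS a).addUnit
      map_zero' := AddUnits.ext (by simp)
      map_add' := fun a b => AddUnits.ext (by simp) }
  obtain ⟨g, hg, hgu⟩ := hgp (AddUnits N) F
  refine ⟨(AddUnits.coeHom N).comp g, ?_, ?_⟩
  · ext a
    have : g (γ a) = F a := by rw [← AddMonoidHom.comp_apply, hg]
    simp [this, F]
  · intro h' hh'
    -- every value of `h'` is an additive unit since `G` is a group
    have hu : ∀ y : G, IsAddUnit (h' y) := fun y =>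
      ⟨AddUnits.mk (h' y) (h' (-y)) (by rw [← map_add]; simp) (by rw [← map_add]; simp), rfl⟩
    let H' : G →+ AddUnits N :=
      { toFun := fun y => (hu y).addUnit
        map_zero' := AddUnits.ext (by simp)
        map_add' := fun a b => AddUnits.ext (by simp) }
    have hH' : H'.comp γ = F := by
      ext a
      show ((hu (γ a)).addUnit : N) = ((hS a).addUnit : N)
      simp only [IsAddUnit.addUnit_spec]
      rw [← AddMonoidHom.comp_apply, hh']
    have hEq : H' = g := hgu H' hH'
    ext y
    show h' y = g y
    rw [← hEq]
    simp [H']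
end

section
/- Let φ : F → M be surjective with F free with finite basis E, R ⊆ F × F the kernel congruence, B a generating set for R, and E^× = E ∩ φ⁻¹(M^×). For a subset J ⊆ E \ E^×, the following are equivalent: (1) J = E ∩ φ⁻¹(p) for some prime ideal p of M; (2) for all (a,b) ∈ R, a ∈ J + F iff b ∈ J + F; (3) for all (a,b) ∈ B, a ∈ J + F iff b ∈ J + F. -/
/-!
The complement of a prime ideal of a commutative monoid is a submonoid, so a prime ideal of `ℕ^E`
is generated by the basis vectors it contains. Pulling `p` back along `φ` shows that (1) forces
`φ⁻¹ p = J + F`, whence (2). Conversely `J + F` is itself prime, and when it is a union of fibres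
of `φ` its image is a prime ideal of `M` cutting out `J`. Finally, "lying in a prime ideal" is a
congruence, so it is compatible with `R` as soon as it is compatible with the generators `B`.
-/

open Set

section

variable {M : Type*} [AddCommMonoid M]

structure IsPrimeAddIdeal (p : Set M) : Prop where
  add_mem : ∀ a ∈ p, ∀ m : M, a + m ∈ p
  ne_univ : p ≠ univ
  mem_or_mem : ∀ a b : M, a + b ∈ p → a ∈ p ∨ b ∈ p

namespace IsPrimeAddIdeal

variable {p : Set M}

theorem zero_notMem (hp : IsPrimeAddIdeal p) : (0 : M) ∉ p := fun h0 =>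
  hp.ne_univ <| eq_univ_of_forall fun m => by simpa using hp.add_mem 0 h0 m

theorem add_mem_iff (hp : IsPrimeAddIdeal p) {a b : M} : a + b ∈ p ↔ a ∈ p ∨ b ∈ p :=
  ⟨hp.mem_or_mem a b, fun h => h.elim (fun ha => hp.add_mem a ha b)
    fun hb => add_comm b a ▸ hp.add_mem b hb a⟩

def complSubmonoid (hp : IsPrimeAddIdeal p) : AddSubmonoid M where
  carrier := pᶜ
  zero_mem' := hp.zero_notMem
  add_mem' ha hb hab := (hp.mem_or_mem _ _ hab).elim ha hb

def addCon (hp : IsPrimeAddIdeal p) : AddCon M where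
  r a b := a ∈ p ↔ b ∈ p
  iseqv := ⟨fun _ => Iff.rfl, Iff.symm, Iff.trans⟩
  add' h₁ h₂ := by simp only [hp.add_mem_iff, h₁, h₂]

theorem forall_addConGen_iff (hp : IsPrimeAddIdeal p) (r : M → M → Prop) :
    (∀ a b, addConGen r a b → (a ∈ p ↔ b ∈ p)) ↔ ∀ a b, r a b → (a ∈ p ↔ b ∈ p) :=
  ⟨fun h a b hab => h a b (.of a b hab),
    fun h _ _ hab => (AddCon.addConGen_le (c := hp.addCon)).2 h hab⟩

theorem preimage (hp : IsPrimeAddIdeal p) {N : Type*} [AddCommMonoid N] (f : N →+ M) :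
    IsPrimeAddIdeal (f ⁻¹' p) where
  add_mem a ha m := by simpa using hp.add_mem _ ha (f m)
  ne_univ h := hp.zero_notMem <| by simpa using eq_univ_iff_forall.1 h 0
  mem_or_mem a b hab := hp.mem_or_mem _ _ (by simpa using hab)

end IsPrimeAddIdeal

theorem preimage_image_of_saturated {α β : Type*} {f : α → β} {s : Set α}
    (hs : ∀ a b, f a = f b → (a ∈ s ↔ b ∈ s)) : f ⁻¹' (f '' s) = s :=
  Subset.antisymm (fun _ ⟨b, hb, hba⟩ => (hs b _ hba).1 hb) (subset_preimage_image f s)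

theorem IsPrimeAddIdeal.image {N : Type*} [AddCommMonoid N] {P : Set N} (hP : IsPrimeAddIdeal P)
    {f : N →+ M} (hf : Function.Surjective f) (hsat : ∀ a b, f a = f b → (a ∈ P ↔ b ∈ P)) :
    IsPrimeAddIdeal (f '' P) := by
  have hmem (a : N) : f a ∈ f '' P ↔ a ∈ P := by
    rw [← mem_preimage, preimage_image_of_saturated hsat]
  refine ⟨?_, fun h => hP.zero_notMem ?_, ?_⟩
  · rintro _ ⟨a, ha, rfl⟩ m
    obtain ⟨b, rfl⟩ := hf m
    exact ⟨a + b, hP.add_mem a ha b, map_add f a b⟩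
  · rw [← hmem, map_zero, h]
    exact mem_univ 0
  · intro x y hxy
    obtain ⟨a, rfl⟩ := hf x
    obtain ⟨b, rfl⟩ := hf y
    rw [← map_add, hmem] at hxy
    simpa only [hmem] using hP.mem_or_mem a b hxy

section basisIdeal

variable {E : Type*}

/-- The monoid ideal `J + F` of `F = ℕ^E` generated by the basis vectors indexed by `J`. -/
def basisIdeal (J : Set E) : Set (E → ℕ) := {a | ∃ e ∈ J, a e ≠ 0}

theorem isPrimeAddIdeal_basisIdeal (J : Set E) : IsPrimeAddIdeal (basisIdeal J) where
  add_mem _ := fun ⟨e, he, hae⟩ _ => ⟨e, he, by simp [hae]⟩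
  ne_univ h := by simpa [basisIdeal] using eq_univ_iff_forall.1 h 0
  mem_or_mem a b := fun ⟨e, he, habe⟩ => by
    by_cases hae : a e = 0
    · exact .inr ⟨e, he, by simpa [hae] using habe⟩
    · exact .inl ⟨e, he, hae⟩

variable [DecidableEq E]

theorem exists_single_add_iff_mem_basisIdeal (J : Set E) (a : E → ℕ) :
    (∃ e ∈ J, ∃ g : E → ℕ, a = Pi.single e 1 + g) ↔ a ∈ basisIdeal J := by
  refine ⟨fun ⟨e, he, g, ha⟩ => ⟨e, he, by simp [ha]⟩,
    fun ⟨e, he, hae⟩ => ⟨e, he, a - Pi.single e 1, ?_⟩⟩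
  ext x
  by_cases hx : x = e
  · subst hx
    simp only [Pi.add_apply, Pi.sub_apply, Pi.single_eq_same]
    omega
  · simp [hx]

theorem single_mem_basisIdeal_iff {J : Set E} {e : E} : Pi.single e 1 ∈ basisIdeal J ↔ e ∈ J := by
  refine ⟨fun ⟨e', he', h⟩ => ?_, fun he => ⟨e, he, by simp⟩⟩
  obtain rfl : e' = e := by by_contra hne; simp [hne] at h
  exact he'

theorem IsPrimeAddIdeal.eq_basisIdeal [Fintype E] {P : Set (E → ℕ)} (hP : IsPrimeAddIdeal P) :
    P = basisIdeal {e | Pi.single e 1 ∈ P} := by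
  ext a
  refine ⟨fun ha => ?_, fun ⟨e, he, hae⟩ => ?_⟩
  · by_contra h
    simp only [basisIdeal, mem_ofPred_eq, not_exists, not_and, not_not] at h
    refine (show a ∈ hP.complSubmonoid from ?_) ha
    rw [← Finset.univ_sum_single a]
    refine AddSubmonoid.sum_mem _ fun e _ => ?_
    rw [← mul_one (a e), ← smul_eq_mul, Pi.single_smul']
    by_cases hae : a e = 0
    · simp [hae, hP.complSubmonoid.zero_mem]
    · exact hP.complSubmonoid.nsmul_mem (show Pi.single e 1 ∉ P from fun he => hae (h e he)) _
  · obtain ⟨e, he, g, rfl⟩ := (exists_single_add_iff_mem_basisIdeal _ a).2 ⟨e, he, hae⟩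
    exact hP.add_mem _ he g

theorem IsPrimeAddIdeal.preimage_eq_basisIdeal [Fintype E] {p : Set M} (hp : IsPrimeAddIdeal p)
    (φ : (E → ℕ) →+ M) : φ ⁻¹' p = basisIdeal {e | φ (Pi.single e 1) ∈ p} :=
  (hp.preimage φ).eq_basisIdeal

end basisIdeal

end

theorem primality_checked_on_presentation_general (E : Type*) [Fintype E] [DecidableEq E]
    (M : Type*) [AddCommMonoid M]
    (φ : (E → ℕ) →+ M) (hsurj : Function.Surjective φ)
    (B : Set ((E → ℕ) × (E → ℕ)))
    (hgen : ∀ a b : E → ℕ, φ a = φ b ↔ addConGen (fun u v => (u, v) ∈ B) a b)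
    (J : Set E) :
    ((∃ p : Set M, (∀ a ∈ p, ∀ m : M, a + m ∈ p) ∧ p ≠ Set.univ ∧
        (∀ a b : M, a + b ∈ p → a ∈ p ∨ b ∈ p) ∧
        J = {e : E | φ (Pi.single e 1) ∈ p}) ↔
      (∀ a b : E → ℕ, φ a = φ b →
        ((∃ e ∈ J, ∃ g : E → ℕ, a = Pi.single e 1 + g) ↔ (∃ e ∈ J, ∃ g : E → ℕ, b = Pi.single e 1 + g)))) ∧
    ((∀ a b : E → ℕ, φ a = φ b →
        ((∃ e ∈ J, ∃ g : E → ℕ, a = Pi.single e 1 + g) ↔ (∃ e ∈ J, ∃ g : E → ℕ, b = Pi.single e 1 + g))) ↔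
      (∀ q ∈ B, ((∃ e ∈ J, ∃ g : E → ℕ, q.1 = Pi.single e 1 + g) ↔
        (∃ e ∈ J, ∃ g : E → ℕ, q.2 = Pi.single e 1 + g)))) := by
  simp only [exists_single_add_iff_mem_basisIdeal]
  have hJ := isPrimeAddIdeal_basisIdeal J
  refine ⟨⟨?_, fun hsat => ?_⟩, ?_⟩
  · rintro ⟨p, hadd, hne, hprime, rfl⟩ a b hab
    simp only [← (IsPrimeAddIdeal.mk hadd hne hprime).preimage_eq_basisIdeal φ, mem_preimage, hab]
  · have hp := hJ.image hsurj hsat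
    refine ⟨_, hp.add_mem, hp.ne_univ, hp.mem_or_mem, ext fun e => ?_⟩
    rw [mem_ofPred_eq, ← mem_preimage, preimage_image_of_saturated hsat, single_mem_basisIdeal_iff]
  · simpa only [hgen, Prod.forall] using hJ.forall_addConGen_iff _

/-- Let `φ : F = ℕ^E → M` be surjective with kernel congruence `R`
generated by a set `B`, and let `E^×` be the basis elements mapping to units of `M`.
For a subset `J ⊆ E \ E^×`, the following are equivalent:
(1) `J = E ∩ φ⁻¹(p)` for some prime ideal `p ⊆ M`;
(2) for all `(a,b) ∈ R`, `a ∈ J + F ↔ b ∈ J + F`;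
(3) for all `(a,b) ∈ B`, `a ∈ J + F ↔ b ∈ J + F`. -/
theorem primality_checked_on_presentation (E : Type*) [Fintype E] [DecidableEq E]
    (M : Type*) [AddCommMonoid M]
    (φ : (E → ℕ) →+ M) (hsurj : Function.Surjective φ)
    (B : Set ((E → ℕ) × (E → ℕ)))
    (hgen : ∀ a b : E → ℕ, φ a = φ b ↔ addConGen (fun u v => (u, v) ∈ B) a b)
    (J : Set E) (hJ : ∀ e ∈ J, ¬IsAddUnit (φ (Pi.single e 1))) :
    ((∃ p : Set M, (∀ a ∈ p, ∀ m : M, a + m ∈ p) ∧ p ≠ Set.univ ∧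
        (∀ a b : M, a + b ∈ p → a ∈ p ∨ b ∈ p) ∧
        J = {e : E | φ (Pi.single e 1) ∈ p}) ↔
      (∀ a b : E → ℕ, φ a = φ b →
        ((∃ e ∈ J, ∃ g : E → ℕ, a = Pi.single e 1 + g) ↔ (∃ e ∈ J, ∃ g : E → ℕ, b = Pi.single e 1 + g)))) ∧
    ((∀ a b : E → ℕ, φ a = φ b →
        ((∃ e ∈ J, ∃ g : E → ℕ, a = Pi.single e 1 + g) ↔ (∃ e ∈ J, ∃ g : E → ℕ, b = Pi.single e 1 + g))) ↔
      (∀ q ∈ B, ((∃ e ∈ J, ∃ g : E → ℕ, q.1 = Pi.single e 1 + g) ↔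
        (∃ e ∈ J, ∃ g : E → ℕ, q.2 = Pi.single e 1 + g)))) :=
  primality_checked_on_presentation_general E M φ hsurj B hgen J
end

section
/- Let σ be a rational polyhedral cone dual to an fs monoid P, and let σ̄ = Hom(P, ℝ≥0 ∪ {∞}) be its extended cone. Then σ̄ decomposes as the disjoint union, over faces κ of σ, of the subsets ∞_κ + σ; moreover each ∞_κ + σ is a submonoid of σ̄ with neutral element ∞_κ, canonically isomorphic as a monoid to the quotient cone σ/(ℝκ). -/
namespace Stmt16

open scoped NNReal ENNReal

variable (P : Type*) [AddCommMonoid P]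

/-- `h` is an additive map (a morphism of monoids given as a bare function). -/
def IsMonHom {α : Type*} [AddCommMonoid α] (h : P → α) : Prop :=
  h 0 = 0 ∧ ∀ a b : P, h (a + b) = h a + h b

/-- The cone `σ = Hom(P, ℝ≥0)` associated to `P`. -/
def cone : Set (P → ℝ≥0) := {h | IsMonHom P h}

/-- The extended cone `σ̄ = Hom(P, ℝ≥0 ∪ {∞})`. -/
def extCone : Set (P → ℝ≥0∞) := {h | IsMonHom P h}

/-- `κ` is a face of the cone `σ`: a submonoid of `σ` closed under summands. -/
def IsFace (κ : Set (P → ℝ≥0)) : Prop :=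
  κ ⊆ cone P ∧ (0 : P → ℝ≥0) ∈ κ ∧ (∀ f ∈ κ, ∀ g ∈ κ, f + g ∈ κ) ∧
    ∀ f ∈ cone P, ∀ g ∈ cone P, f + g ∈ κ → f ∈ κ ∧ g ∈ κ

open Classical in
/-- The origin at `κ = ∞`: it sends `f ∈ P` to `0` if `f` lies in the dual face `κ^∨`
(i.e. `φ f = 0` for all `φ ∈ κ`) and to `∞` otherwise. -/
noncomputable def infAt (κ : Set (P → ℝ≥0)) : P → ℝ≥0∞ :=
  fun f => if ∀ φ ∈ κ, φ f = 0 then 0 else ⊤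

/-- The asymptotic cone `∞_κ + σ ⊆ σ̄`. -/
def asympCone (κ : Set (P → ℝ≥0)) : Set (P → ℝ≥0∞) :=
  {h | ∃ q ∈ cone P, h = fun f => infAt P κ f + (q f : ℝ≥0∞)}

end Stmt16

/-!
Faces `κ` of `σ` and faces `F` of `P` correspond via `κ ↦ κ^∨` and `F ↦ F^⊥ ∩ σ`. This rests on
two facts about a face `F` of a finitely generated cancellative monoid `P`: some additive
`Ψ : P → ℝ≥0` vanishes exactly on `F` (Farkas' lemma over `ℚ` applied to a presentation of `P`,
then clearing denominators), and every additive map `F → ℝ≥0` extends to `P` (extend it to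
`P^gp → ℝ`, possible as `ℝ` is divisible, then add a large multiple of `Ψ`).

An `h ∈ σ̄` is finite exactly on a face `F` of `P`; extending `h|_F` to some `q ∈ σ` gives
`h = ∞_κ + q` for `κ = F^⊥ ∩ σ`, and `κ` is unique because a face of `σ` is recovered from its dual
face. Finally `∞_κ + q = ∞_κ + q'` says `q = q'` on `κ^∨`, and comparing both with a large
multiple of an element of `κ` vanishing exactly on `κ^∨` turns this into `q + k = q' + k'`.
-/

open Algebra Set
open scoped NNReal ENNReal

lemma Module.Dual.apply_add_div_smul_eq {𝕜 V : Type*} [Field 𝕜] [AddCommGroup V] [Module 𝕜 V]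
    {y₀ : Module.Dual 𝕜 V} {b : V} (hb : y₀ b ≠ 0)
    (z : Module.Dual 𝕜 V) (a : V) :
    z (a + (y₀ a / -y₀ b) • b) = (z - (z b / y₀ b) • y₀) a := by
  simp only [map_add, map_smul, smul_eq_mul, LinearMap.sub_apply, LinearMap.smul_apply]
  field_simp
  ring

section Farkas

variable {𝕜 V : Type*} [Field 𝕜] [LinearOrder 𝕜] [IsStrictOrderedRing 𝕜]
  [AddCommGroup V] [Module 𝕜 V]

lemma Module.exists_dual_neg_of_ne_zero {x : V} (hx : x ≠ 0) :
    ∃ y : Module.Dual 𝕜 V, y x < 0 := by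
  obtain ⟨y, hy⟩ := Module.Projective.exists_dual_ne_zero 𝕜 hx
  rcases hy.lt_or_gt with h | h
  · exact ⟨y, h⟩
  · exact ⟨-y, by simpa using h⟩

theorem PointedCone.mem_hull_or_exists_dual_neg (s : Finset V) (x : V) :
    x ∈ hull 𝕜 (s : Set V) ∨ ∃ y : Module.Dual 𝕜 V, (∀ a ∈ s, 0 ≤ y a) ∧ y x < 0 := by
  classical
  rcases s.eq_empty_or_nonempty with rfl | ⟨b, hb⟩
  · by_cases hx : x = 0
    · exact .inl (hx ▸ zero_mem _)
    obtain ⟨y, hy⟩ := Module.exists_dual_neg_of_ne_zero (𝕜 := 𝕜) hx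
    exact .inr ⟨y, by simp, hy⟩
  have hbs : b ∈ hull 𝕜 (s : Set V) := subset_hull hb
  rcases mem_hull_or_exists_dual_neg (s.erase b) x with hx | ⟨y₀, hy₀, hy₀x⟩
  · exact .inl (Submodule.span_mono (by simp) hx)
  have hy₀s : ∀ a ∈ s, a ≠ b → 0 ≤ y₀ a := fun a ha hab => hy₀ a (Finset.mem_erase.mpr ⟨hab, ha⟩)
  by_cases hy₀b : 0 ≤ y₀ b
  · refine .inr ⟨y₀, fun a ha => ?_, hy₀x⟩
    by_cases hab : a = b
    · exact hab ▸ hy₀b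
    · exact hy₀s a ha hab
  push Not at hy₀b
  -- Fourier–Motzkin elimination: project along `b` onto the hyperplane `y₀ = 0`.
  set proj : V → V := fun a => a + (y₀ a / -y₀ b) • b with hproj
  rcases mem_hull_or_exists_dual_neg ((s.erase b).image proj) (proj x) with hx | ⟨z, hz, hzx⟩
  · refine .inl ?_
    have hle : hull 𝕜 ↑((s.erase b).image proj) ≤ hull 𝕜 (s : Set V) := by
      refine Submodule.span_le.mpr fun _ ha => ?_
      obtain ⟨a, ha', rfl⟩ := Finset.mem_image.mp ha
      obtain ⟨hab, ha⟩ := Finset.mem_erase.mp ha'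
      exact add_mem (subset_hull ha) (smul_mem _ (div_nonneg (hy₀s a ha hab) (by linarith)) hbs)
    have hx' : x = proj x + (y₀ x / y₀ b) • b := by
      simp only [hproj, div_neg, neg_smul]
      abel
    rw [hx']
    exact add_mem (hle hx) (smul_mem _ (div_nonneg_of_nonpos hy₀x.le hy₀b.le) hbs)
  · have hzproj (a : V) : z (proj a) = (z - (z b / y₀ b) • y₀) a :=
      Module.Dual.apply_add_div_smul_eq hy₀b.ne z a
    refine .inr ⟨z - (z b / y₀ b) • y₀, fun a ha => ?_, by rw [← hzproj]; exact hzx⟩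
    by_cases hab : a = b
    · subst hab
      simp [div_mul_cancel₀ _ hy₀b.ne]
    · rw [← hzproj]
      exact hz _ (Finset.mem_image_of_mem _ (Finset.mem_erase.mpr ⟨hab, ha⟩))
termination_by s.card
decreasing_by
  all_goals classical first
    | exact Finset.card_erase_lt_of_mem hb
    | exact Finset.card_image_le.trans_lt (Finset.card_erase_lt_of_mem hb)

end Farkas

theorem PointedCone.exists_nsmul_mem_closure_of_mem_hull {V : Type*} [AddCommGroup V]
    [Module ℚ V] {A : Set V} {x : V} (hx : x ∈ PointedCone.hull ℚ A) :
    ∃ N : ℕ, 0 < N ∧ N • x ∈ AddSubmonoid.closure A := by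
  induction hx using Submodule.span_induction with
  | mem x hx => exact ⟨1, one_pos, by simpa using AddSubmonoid.subset_closure hx⟩
  | zero => exact ⟨1, one_pos, by simp⟩
  | add x y _ _ hx hy =>
    obtain ⟨M, hM, hMx⟩ := hx
    obtain ⟨N, hN, hNy⟩ := hy
    refine ⟨M * N, Nat.mul_pos hM hN, ?_⟩
    rw [smul_add, mul_nsmul, mul_comm, mul_nsmul]
    exact add_mem (nsmul_mem hMx N) (nsmul_mem hNy M)
  | smul t x _ hx =>
    obtain ⟨N, hN, hNx⟩ := hx
    obtain ⟨t, ht⟩ := t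
    refine ⟨t.den * N, Nat.mul_pos t.den_pos hN, ?_⟩
    have hnum : ((t.num.toNat : ℕ) : ℚ) = t.den * t := by
      have h := congrArg (Int.cast : ℤ → ℚ) (Int.toNat_of_nonneg (Rat.num_nonneg.mpr ht))
      push_cast at h
      rw [h, mul_comm, Rat.mul_den_eq_num]
    have : (t.den * N) • (t • x) = t.num.toNat • N • x := by
      simp only [← Nat.cast_smul_eq_nsmul ℚ, smul_smul, hnum]
      push_cast
      ring_nf
    simpa [this] using nsmul_mem hNx _

namespace AddSubmonoid

variable {P : Type*} [AddCommMonoid P] {F : AddSubmonoid P}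

def IsFace (F : AddSubmonoid P) : Prop := ∀ ⦃a b : P⦄, a + b ∈ F → a ∈ F

lemma IsFace.right_mem (hF : F.IsFace) {a b : P} (h : a + b ∈ F) : b ∈ F :=
  hF (add_comm a b ▸ h)

lemma IsFace.mem_of_nsmul_mem (hF : F.IsFace) {n : ℕ} {a : P} (hn : n ≠ 0) (h : n • a ∈ F) :
    a ∈ F := by
  obtain ⟨m, rfl⟩ := Nat.exists_eq_succ_of_ne_zero hn
  exact hF.right_mem (succ_nsmul a m ▸ h)

lemma IsFace.mem_of_neg_of_mem_sup [IsCancelAdd P] (hF : F.IsFace) {x : P}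
    (h : -GrothendieckAddGroup.of x ∈
      AddMonoidHom.mrange (GrothendieckAddGroup.of (M := P)) ⊔ F.map (-GrothendieckAddGroup.of)) :
    x ∈ F := by
  obtain ⟨_, ⟨p, rfl⟩, _, ⟨f, hf, rfl⟩, h⟩ := mem_sup.mp h
  have : p + x = f := GrothendieckAddGroup.of_injective <| by
    rw [AddMonoidHom.neg_apply, ← sub_eq_add_neg] at h
    rw [map_add, ← sub_eq_zero, ← sub_eq_zero.mpr h]
    abel
  exact hF.right_mem (this ▸ hf)

lemma IsFace.eq_closure_inter {S : Set P} (hS : closure S = ⊤) (hF : F.IsFace) :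
    F = closure (S ∩ F) := by
  refine le_antisymm (fun f hf => ?_) (closure_le.mpr Set.inter_subset_right)
  induction (hS ▸ mem_top f : f ∈ closure S) using closure_induction with
  | mem s hs => exact subset_closure ⟨hs, hf⟩
  | zero => exact zero_mem _
  | add a b _ _ ha hb => exact add_mem (ha (hF hf)) (hb (hF.right_mem hf))

end AddSubmonoid

namespace AddMonoidHom

variable {P : Type*} [AddCommMonoid P]

def toNNReal (φ : P →+ ℝ) (hφ : ∀ f, 0 ≤ φ f) : P →+ ℝ≥0 where
  toFun f := ⟨φ f, hφ f⟩
  map_zero' := NNReal.eq (map_zero φ)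
  map_add' a b := NNReal.eq (map_add φ a b)

@[simp]
lemma coe_toNNReal_apply (φ : P →+ ℝ) (hφ : ∀ f, 0 ≤ φ f) (f : P) :
    (φ.toNNReal hφ f : ℝ) = φ f :=
  rfl

def finiteLocus (h : P →+ ℝ≥0∞) : AddSubmonoid P where
  carrier := {f | h f ≠ ⊤}
  zero_mem' := by simp
  add_mem' {a b} ha hb := by simp_all

lemma isFace_finiteLocus (h : P →+ ℝ≥0∞) : h.finiteLocus.IsFace :=
  fun a b hab => by simp_all [finiteLocus]

theorem exists_nat_forall_le_mul [AddMonoid.FG P] (ψ : P →+ ℝ) (φ : P →+ ℝ≥0)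
    (h : ∀ f, φ f = 0 → ψ f ≤ 0) : ∃ n : ℕ, ∀ f, ψ f ≤ n * φ f := by
  obtain ⟨S, hS⟩ := AddMonoid.FG.fg_top (M := P)
  have : ∀ᶠ n : ℕ in Filter.atTop, ∀ s ∈ S, ψ s ≤ n * φ s := by
    refine (Filter.eventually_all_finset S).mpr fun s _ => ?_
    rcases (φ s).coe_nonneg.eq_or_lt with hs | hs
    · exact .of_forall fun n => by
        rw [← hs, mul_zero]
        exact h s (by exact_mod_cast hs.symm)
    · exact (tendsto_natCast_atTop_atTop.atTop_mul_const hs).eventually_ge_atTop _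
  obtain ⟨n, hn⟩ := this.exists
  refine ⟨n, fun f => ?_⟩
  induction (hS ▸ AddSubmonoid.mem_top f : f ∈ AddSubmonoid.closure S) using
    AddSubmonoid.closure_induction with
  | mem s hs => exact hn s hs
  | zero => simp
  | add a b _ _ ha hb =>
    push_cast [map_add]
    linarith

end AddMonoidHom

namespace Algebra.GrothendieckAddGroup

variable {P : Type*} [AddCommMonoid P]

lemma exists_of_sub_of (g : GrothendieckAddGroup P) : ∃ a b : P, of a - of b = g := by
  induction g using AddLocalization.ind with
  | H y =>
    refine ⟨y.1, y.2, ?_⟩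
    rw [AddLocalization.mk_eq_addMonoidOf_mk', sub_eq_iff_eq_add]
    exact ((AddLocalization.addMonoidOf ⊤).mk'_spec y.1 y.2).symm

lemma lift_of {A : Type*} [AddCommGroup A] (f : P →+ A) (x : P) : lift f (of x) = f x :=
  (AddLocalization.addMonoidOf ⊤).lift_eq _ x

lemma lift_of_comp_subtype_injective [IsCancelAdd P] (F : AddSubmonoid P) :
    Function.Injective (lift (of.comp F.subtype)) := by
  refine (injective_iff_map_eq_zero _).mpr fun g hg => ?_
  obtain ⟨a, b, rfl⟩ := exists_of_sub_of g
  rw [map_sub, lift_of, lift_of, sub_eq_zero] at hg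
  rw [Subtype.ext (of_injective hg), sub_self]

end Algebra.GrothendieckAddGroup

open GrothendieckAddGroup in
theorem AddSubmonoid.exists_addMonoidHom_extend {P A : Type*} [AddCommMonoid P] [IsCancelAdd P]
    [AddCommGroup A] [DivisibleBy A ℤ] (F : AddSubmonoid P) (g : F →+ A) :
    ∃ ℓ : P →+ A, ∀ f : F, ℓ f = g f := by
  obtain ⟨L, hL⟩ := (Module.Baer.of_divisible A).extension_property_addMonoidHom _
    (lift_of_comp_subtype_injective F) (lift g)
  refine ⟨L.comp of, fun f => ?_⟩
  have := DFunLike.congr_fun hL (of f)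
  rwa [AddMonoidHom.comp_apply, lift_of, lift_of] at this

section Presentation

open GrothendieckAddGroup

variable {P ι : Type*} [AddCommMonoid P] [Fintype ι] {s : ι → P}

variable (s) in
lemma linearCombination_natCast_eq_of (c : ι → ℕ) :
    Fintype.linearCombination ℤ (of ∘ s) (fun i => c i) = of (∑ i, c i • s i) := by
  simp [Fintype.linearCombination_apply, map_sum, map_nsmul]
  rfl

variable (s) in
lemma linearCombination_single_eq_of [DecidableEq ι] (i : ι) :
    Fintype.linearCombination ℤ (of ∘ s) (Pi.single i 1) = of (s i) := by
  simp [Fintype.linearCombination_apply_single]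
  rfl

lemma linearCombination_surjective (hs : AddSubmonoid.closure (range s) = ⊤) :
    Function.Surjective (Fintype.linearCombination ℤ (of ∘ s)) := by
  have hrep (p : P) : ∃ c : ι → ℕ, p = ∑ i, c i • s i :=
    AddSubmonoid.mem_closure_range_iff_of_fintype.mp (hs ▸ AddSubmonoid.mem_top p)
  intro g
  obtain ⟨a, b, rfl⟩ := exists_of_sub_of g
  obtain ⟨ca, rfl⟩ := hrep a
  obtain ⟨cb, rfl⟩ := hrep b
  exact ⟨(fun i => (ca i : ℤ)) - fun i => (cb i : ℤ),
    by rw [map_sub, linearCombination_natCast_eq_of, linearCombination_natCast_eq_of]⟩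

lemma exists_comp_linearCombination_eq (hs : AddSubmonoid.closure (range s) = ⊤) {A : Type*}
    [AddCommGroup A] (g : (ι → ℤ) →+ A)
    (hg : ∀ d, Fintype.linearCombination ℤ (of ∘ s) d = 0 → g d = 0) :
    ∃ Ψ : GrothendieckAddGroup P →+ A, ∀ d, Ψ (Fintype.linearCombination ℤ (of ∘ s) d) = g d :=
  have hE := linearCombination_surjective hs
  ⟨(Fintype.linearCombination ℤ (of ∘ s)).toAddMonoidHom.liftOfRightInverse _
    (Function.rightInverse_surjInv hE) ⟨g, hg⟩,
    AddMonoidHom.liftOfRightInverse_comp_apply _ _ _ _⟩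

lemma AddSubmonoid.IsFace.mem_of_neg_mem_hull [IsCancelAdd P] {F : AddSubmonoid P}
    (hF : F.IsFace) {J : Type*} (v : J → ι → ℤ)
    (hv : ∀ j, Fintype.linearCombination ℤ (of ∘ s) (v j) ∈
      AddMonoidHom.mrange (of (M := P)) ⊔ F.map (-of))
    {c : ι → ℕ} (hc : (Int.castAddHom ℚ).compLeft ι (-fun i => (c i : ℤ)) ∈
      PointedCone.hull ℚ (range ((Int.castAddHom ℚ).compLeft ι ∘ v))) :
    ∑ i, c i • s i ∈ F := by
  obtain ⟨N, hN, hNc⟩ := PointedCone.exists_nsmul_mem_closure_of_mem_hull hc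
  rw [range_comp, ← AddMonoidHom.map_mclosure, ← map_nsmul] at hNc
  obtain ⟨a, ha, hac⟩ := AddSubmonoid.mem_map.mp hNc
  obtain rfl : a = N • -fun i => (c i : ℤ) := funext fun i => by
    have := congrFun hac i
    simp only [AddMonoidHom.compLeft_apply, Function.comp_apply, Int.coe_castAddHom] at this
    exact_mod_cast this
  have hle : AddSubmonoid.closure (range v) ≤
      (AddMonoidHom.mrange (of (M := P)) ⊔ F.map (-of)).comap
        (Fintype.linearCombination ℤ (of ∘ s)).toAddMonoidHom :=
    AddSubmonoid.closure_le.mpr (range_subset_iff.mpr hv)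
  have := hle ha
  rw [AddSubmonoid.mem_comap, LinearMap.toAddMonoidHom_coe, map_nsmul, map_neg,
    linearCombination_natCast_eq_of, smul_neg, ← map_nsmul] at this
  exact hF.mem_of_nsmul_mem hN.ne' (hF.mem_of_neg_of_mem_sup this)

open GrothendieckAddGroup in
theorem AddSubmonoid.IsFace.exists_rat_hom [IsCancelAdd P]
    (hs : AddSubmonoid.closure (range s) = ⊤) {F : AddSubmonoid P} (hF : F.IsFace) {f₀ : P}
    (hf₀ : f₀ ∉ F) :
    ∃ φ : P →+ ℚ, (∀ i, 0 ≤ φ (s i)) ∧ (∀ i, s i ∈ F → φ (s i) = 0) ∧ 0 < φ f₀ := by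
  classical
  set E := Fintype.linearCombination ℤ (of ∘ s)
  obtain ⟨T, hT⟩ : (LinearMap.ker E).FG := IsNoetherian.noetherian _
  obtain ⟨c₀, rfl⟩ :=
    AddSubmonoid.mem_closure_range_iff_of_fintype.mp (hs ▸ AddSubmonoid.mem_top f₀)
  set castV : (ι → ℤ) →+ (ι → ℚ) := (Int.castAddHom ℚ).compLeft ι
  set e : ι → ι → ℤ := fun i => Pi.single i 1
  -- A functional nonnegative on all of these kills the relations `T`, is nonnegative on the
  -- generators and vanishes on those lying in `F`.
  set v : (T ⊕ T) ⊕ (ι ⊕ {i // s i ∈ F}) → ι → ℤ :=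
    Sum.elim (Sum.elim (fun t => t) fun t => -t) (Sum.elim e fun i => -e i)
  have hker (t : T) : E t = 0 := (hT ▸ Submodule.subset_span t.2 : (t : ι → ℤ) ∈ LinearMap.ker E)
  rcases PointedCone.mem_hull_or_exists_dual_neg (𝕜 := ℚ) (Finset.univ.image (castV ∘ v))
    (castV (-fun i => (c₀ i : ℤ))) with h | ⟨y, hy, hyx⟩
  · rw [Finset.coe_image, Finset.coe_univ, Set.image_univ] at h
    refine absurd (hF.mem_of_neg_mem_hull v (fun j => ?_) h) hf₀
    rcases j with (t | t) | (i | ⟨i, hi⟩)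
    · exact (hker t).symm ▸ zero_mem _
    · exact (by simp [v, hker t] : E (v (.inl (.inr t))) = 0) ▸ zero_mem _
    · exact AddSubmonoid.mem_sup_left ⟨s i, (linearCombination_single_eq_of s i).symm⟩
    · refine AddSubmonoid.mem_sup_right ⟨s i, hi, ?_⟩
      simp only [v, Sum.elim_inr, map_neg, e, linearCombination_single_eq_of]
      rfl
  · have hyv (j) : 0 ≤ y (castV (v j)) := hy _ (Finset.mem_image_of_mem _ (Finset.mem_univ j))
    set g : (ι → ℤ) →+ ℚ := y.toAddMonoidHom.comp castV
    have hg : Submodule.span ℤ (T : Set (ι → ℤ)) ≤ LinearMap.ker g.toIntLinearMap :=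
      Submodule.span_le.mpr fun t ht => le_antisymm
        (by simpa [g, v] using hyv (.inl (.inr ⟨t, ht⟩))) (hyv (.inl (.inl ⟨t, ht⟩)))
    obtain ⟨Ψ, hΨ⟩ := exists_comp_linearCombination_eq hs g fun d hd => hg (hT ▸ hd)
    refine ⟨Ψ.comp of, fun i => ?_, fun i hi => ?_, ?_⟩
    · rw [AddMonoidHom.comp_apply, ← linearCombination_single_eq_of, hΨ]
      exact hyv (.inr (.inl i))
    · rw [AddMonoidHom.comp_apply, ← linearCombination_single_eq_of, hΨ]
      refine le_antisymm ?_ (hyv (.inr (.inl i)))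
      simpa [g, v] using hyv (.inr (.inr ⟨i, hi⟩))
    · rw [AddMonoidHom.comp_apply, ← linearCombination_natCast_eq_of, hΨ]
      simpa [g] using hyx

end Presentation

namespace AddSubmonoid

variable {P : Type*} [AddCommMonoid P] {F : AddSubmonoid P}

theorem IsFace.exists_nnreal_hom [AddMonoid.FG P] [IsCancelAdd P] (hF : F.IsFace) {f₀ : P}
    (hf₀ : f₀ ∉ F) : ∃ φ : P →+ ℝ≥0, F ≤ AddMonoidHom.mker φ ∧ φ f₀ ≠ 0 := by
  obtain ⟨S, hS⟩ := AddMonoid.FG.fg_top (M := P)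
  have hs : closure (range ((↑) : S → P)) = ⊤ := by rwa [Subtype.range_coe]
  obtain ⟨φ, hφS, hφF, hφf₀⟩ := hF.exists_rat_hom hs hf₀
  have hφ (f : P) : 0 ≤ φ f := by
    induction (hs ▸ mem_top f : f ∈ closure _) using closure_induction with
    | mem _ h => obtain ⟨i, rfl⟩ := h; exact hφS i
    | zero => simp
    | add a b _ _ ha hb => rw [map_add]; exact add_nonneg ha hb
  refine ⟨((Rat.castHom ℝ).toAddMonoidHom.comp φ).toNNReal fun f => by simpa using hφ f, ?_, ?_⟩
  · rw [hF.eq_closure_inter hs, closure_le]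
    rintro _ ⟨⟨i, rfl⟩, hi⟩
    ext
    simp [hφF i hi]
  · intro h
    have := congrArg NNReal.toReal h
    simp only [AddMonoidHom.coe_toNNReal_apply, AddMonoidHom.comp_apply] at this
    simp at this
    exact hφf₀.ne' this

theorem exists_mem_mker_eq [AddMonoid.FG P] (F : AddSubmonoid P)
    (C : AddSubmonoid (P →+ ℝ≥0)) (hC : ∀ φ ∈ C, F ≤ AddMonoidHom.mker φ)
    (hsep : ∀ f ∉ F, ∃ φ ∈ C, φ f ≠ 0) : ∃ φ ∈ C, AddMonoidHom.mker φ = F := by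
  classical
  obtain ⟨S, hS⟩ := AddMonoid.FG.fg_top (M := P)
  choose! ψ hψC hψ using hsep
  set Φ := ∑ s ∈ S.filter (· ∉ F), ψ s
  have hΦC : Φ ∈ C := _root_.sum_mem fun s hs => hψC s (Finset.mem_filter.mp hs).2
  refine ⟨Φ, hΦC, le_antisymm (fun f hf => ?_) (hC Φ hΦC)⟩
  induction (hS ▸ mem_top f : f ∈ closure S) using closure_induction with
  | mem s hs =>
    by_contra hsF
    simp only [Φ, AddMonoidHom.mem_mker, AddMonoidHom.finsetSum_apply, Finset.sum_eq_zero_iff,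
      Finset.mem_filter] at hf
    exact hψ s hsF (hf s ⟨hs, hsF⟩)
  | zero => exact zero_mem _
  | add a b _ _ ha hb =>
    rw [AddMonoidHom.mem_mker, map_add, add_eq_zero] at hf
    exact add_mem (ha hf.1) (hb hf.2)

variable [AddMonoid.FG P] [IsCancelAdd P]

theorem IsFace.exists_mker_eq (hF : F.IsFace) : ∃ Ψ : P →+ ℝ≥0, AddMonoidHom.mker Ψ = F := by
  let C : AddSubmonoid (P →+ ℝ≥0) :=
    { carrier := {φ | F ≤ AddMonoidHom.mker φ}
      zero_mem' := fun f _ => rfl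
      add_mem' := fun hφ hψ f hf => by
        simp [AddMonoidHom.mem_mker.mp (hφ hf), AddMonoidHom.mem_mker.mp (hψ hf)] }
  obtain ⟨Ψ, -, hΨ⟩ := exists_mem_mker_eq F C (fun _ h => h) fun f hf => by
    obtain ⟨φ, hφF, hφ⟩ := hF.exists_nnreal_hom hf
    exact ⟨φ, hφF, hφ⟩
  exact ⟨Ψ, hΨ⟩

theorem IsFace.exists_nnreal_extend (hF : F.IsFace) (g : F →+ ℝ≥0) :
    ∃ q : P →+ ℝ≥0, ∀ f : F, q f = g f := by
  obtain ⟨ℓ, hℓ⟩ := F.exists_addMonoidHom_extend (NNReal.toRealHom.toAddMonoidHom.comp g)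
  obtain ⟨Ψ, hΨ⟩ := hF.exists_mker_eq
  obtain ⟨n, hn⟩ := (-ℓ).exists_nat_forall_le_mul Ψ fun f hf => by
    have : f ∈ F := hΨ ▸ hf
    simp [hℓ ⟨f, this⟩]
  -- `ℓ` may be negative off `F`; a large multiple of `Ψ` repairs this without changing `ℓ|_F`.
  refine ⟨(ℓ + n • NNReal.toRealHom.toAddMonoidHom.comp Ψ).toNNReal fun f => ?_, fun f => ?_⟩
  · have := hn f
    simp only [AddMonoidHom.neg_apply] at this
    simp
    linarith
  · have : Ψ f = 0 := (hΨ ▸ f.2 : (f : P) ∈ AddMonoidHom.mker Ψ)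
    ext
    simp [hℓ, this]

end AddSubmonoid

namespace Stmt16

section

variable {P : Type*}

/-- The dual face `κ^∨ ⊆ P` of `κ`. -/
def dualFace (κ : Set (P → ℝ≥0)) : Set P := {f | ∀ φ ∈ κ, φ f = 0}

lemma infAt_of_mem {κ : Set (P → ℝ≥0)} {f : P} (hf : f ∈ dualFace κ) : infAt P κ f = 0 :=
  if_pos hf

lemma infAt_of_notMem {κ : Set (P → ℝ≥0)} {f : P} (hf : f ∉ dualFace κ) : infAt P κ f = ⊤ :=
  if_neg hf

lemma infAt_add_self (κ : Set (P → ℝ≥0)) (f : P) : infAt P κ f + infAt P κ f = infAt P κ f := by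
  by_cases hf : f ∈ dualFace κ
  · simp [infAt_of_mem hf]
  · simp [infAt_of_notMem hf]

lemma infAt_add_add_infAt_add (κ : Set (P → ℝ≥0)) (a b : P → ℝ≥0∞) :
    (fun f => infAt P κ f + a f) + (fun f => infAt P κ f + b f) =
      fun f => infAt P κ f + (a f + b f) := by
  funext f
  rw [Pi.add_apply, add_add_add_comm, infAt_add_self]

lemma infAt_add_coe_eq_iff (κ : Set (P → ℝ≥0)) (q q' : P → ℝ≥0) :
    ((fun f => infAt P κ f + (q f : ℝ≥0∞)) = fun f => infAt P κ f + (q' f : ℝ≥0∞)) ↔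
      ∀ f ∈ dualFace κ, q f = q' f := by
  refine ⟨fun h f hf => ?_, fun h => funext fun f => ?_⟩
  · simpa [infAt_of_mem hf] using congrFun h f
  · by_cases hf : f ∈ dualFace κ
    · rw [h f hf]
    · simp [infAt_of_notMem hf]

end

section

variable {P : Type*} [AddCommMonoid P]

def IsMonHom.toAddMonoidHom {α : Type*} [AddCommMonoid α] {q : P → α} (hq : IsMonHom P q) :
    P →+ α where
  toFun := q
  map_zero' := hq.1
  map_add' := hq.2

lemma isMonHom_coe {α : Type*} [AddCommMonoid α] (φ : P →+ α) : IsMonHom P φ :=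
  ⟨map_zero φ, map_add φ⟩

lemma zero_mem_cone : (0 : P → ℝ≥0) ∈ cone P :=
  isMonHom_coe (0 : P →+ ℝ≥0)

lemma add_mem_cone {q q' : P → ℝ≥0} (hq : q ∈ cone P) (hq' : q' ∈ cone P) : q + q' ∈ cone P :=
  isMonHom_coe (IsMonHom.toAddMonoidHom hq + IsMonHom.toAddMonoidHom hq')

lemma nsmul_mem_cone {φ : P → ℝ≥0} (hφ : φ ∈ cone P) (n : ℕ) : n • φ ∈ cone P :=
  isMonHom_coe (n • IsMonHom.toAddMonoidHom hφ)

lemma tsub_mem_cone {q q' : P → ℝ≥0} (hq : q ∈ cone P) (hq' : q' ∈ cone P) (h : q' ≤ q) :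
    q - q' ∈ cone P :=
  ⟨by simp [hq.1, hq'.1], fun a b => by
    simp only [Pi.sub_apply, hq.2, hq'.2, tsub_add_tsub_comm (h a) (h b)]⟩

lemma exists_le_add_nsmul [AddMonoid.FG P] {q q' φ : P → ℝ≥0} (hq : q ∈ cone P)
    (hq' : q' ∈ cone P) (hφ : φ ∈ cone P) (h : ∀ f, φ f = 0 → q' f ≤ q f) :
    ∃ n : ℕ, q' ≤ q + n • φ := by
  let toReal {r : P → ℝ≥0} (hr : r ∈ cone P) : P →+ ℝ :=
    NNReal.toRealHom.toAddMonoidHom.comp (IsMonHom.toAddMonoidHom hr)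
  obtain ⟨n, hn⟩ := (toReal hq' - toReal hq).exists_nat_forall_le_mul
    (IsMonHom.toAddMonoidHom hφ) fun f hf => by
      simpa [toReal, IsMonHom.toAddMonoidHom] using h f hf
  refine ⟨n, fun f => ?_⟩
  have := hn f
  simp [toReal, IsMonHom.toAddMonoidHom] at this
  rw [Pi.add_apply, Pi.smul_apply, nsmul_eq_mul, ← NNReal.coe_le_coe]
  push_cast
  linarith

/-- The face `F^⊥ ∩ σ` of `σ`. -/
def annihilator (F : Set P) : Set (P → ℝ≥0) := {φ | φ ∈ cone P ∧ ∀ f ∈ F, φ f = 0}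

lemma isFace_annihilator (F : Set P) : IsFace P (annihilator F) := by
  refine ⟨fun φ hφ => hφ.1, ⟨zero_mem_cone, fun _ _ => rfl⟩,
    fun φ hφ ψ hψ => ⟨add_mem_cone hφ.1 hψ.1, fun f hf => by simp [hφ.2 f hf, hψ.2 f hf]⟩,
    fun φ hφ ψ hψ h => ⟨⟨hφ, fun f hf => ?_⟩, ⟨hψ, fun f hf => ?_⟩⟩⟩
  · exact (add_eq_zero.mp (h.2 f hf)).1
  · exact (add_eq_zero.mp (h.2 f hf)).2

lemma mem_dualFace_add {κ : Set (P → ℝ≥0)} (hκ : κ ⊆ cone P) {a b : P} :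
    a + b ∈ dualFace κ ↔ a ∈ dualFace κ ∧ b ∈ dualFace κ := by
  simp only [dualFace, Set.mem_ofPred_eq, ← forall₂_and]
  exact forall₂_congr fun φ hφ => by rw [(hκ hφ).2, add_eq_zero]

lemma infAt_mem_extCone {κ : Set (P → ℝ≥0)} (hκ : κ ⊆ cone P) : infAt P κ ∈ extCone P := by
  refine ⟨infAt_of_mem fun φ hφ => (hκ hφ).1, fun a b => ?_⟩
  by_cases ha : a ∈ dualFace κ <;> by_cases hb : b ∈ dualFace κ
  · rw [infAt_of_mem ha, infAt_of_mem hb, infAt_of_mem ((mem_dualFace_add hκ).mpr ⟨ha, hb⟩),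
      add_zero]
  all_goals
    rw [infAt_of_notMem (by rw [mem_dualFace_add hκ]; tauto)]
    first
      | rw [infAt_of_notMem ha, top_add]
      | rw [infAt_of_notMem hb, add_top]

lemma dualFace_eq_of_mem_asympCone {κ : Set (P → ℝ≥0)} {h : P → ℝ≥0∞}
    (hh : h ∈ asympCone P κ) : dualFace κ = {f | h f ≠ ⊤} := by
  obtain ⟨q, -, rfl⟩ := hh
  ext f
  by_cases hf : f ∈ dualFace κ
  · simp [hf, infAt_of_mem hf]
  · simp [hf, infAt_of_notMem hf]

lemma IsFace.nsmul_mem {κ : Set (P → ℝ≥0)} (hκ : IsFace P κ) {φ : P → ℝ≥0} (hφ : φ ∈ κ)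
    (n : ℕ) : n • φ ∈ κ := by
  induction n with
  | zero => simpa using hκ.2.1
  | succ n ih => rw [succ_nsmul]; exact hκ.2.2.1 _ ih _ hφ

end

namespace IsFace

variable {P : Type*} [AddCommMonoid P] [AddMonoid.FG P] {κ : Set (P → ℝ≥0)}

lemma exists_interior (hκ : IsFace P κ) : ∃ φ ∈ κ, ∀ f, φ f = 0 ↔ f ∈ dualFace κ := by
  let D : AddSubmonoid P :=
    { carrier := dualFace κ
      zero_mem' := fun φ hφ => (hκ.1 hφ).1
      add_mem' := fun ha hb => (mem_dualFace_add hκ.1).mpr ⟨ha, hb⟩ }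
  let C : AddSubmonoid (P →+ ℝ≥0) :=
    { carrier := {φ | ⇑φ ∈ κ}
      zero_mem' := hκ.2.1
      add_mem' := fun hφ hψ => hκ.2.2.1 _ hφ _ hψ }
  obtain ⟨φ, hφ, hφD⟩ := AddSubmonoid.exists_mem_mker_eq D C (fun φ hφ f hf => hf φ hφ)
    fun f hf => by
      obtain ⟨ψ, hψ, hψf⟩ : ∃ ψ ∈ κ, ψ f ≠ 0 := by simpa [D, dualFace] using hf
      exact ⟨IsMonHom.toAddMonoidHom (hκ.1 hψ), hψ, hψf⟩
  exact ⟨φ, hφ, fun f => SetLike.ext_iff.mp hφD f⟩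

lemma mem_of_forall_dualFace (hκ : IsFace P κ) {ψ : P → ℝ≥0} (hψ : ψ ∈ cone P)
    (h : ∀ f ∈ dualFace κ, ψ f = 0) : ψ ∈ κ := by
  obtain ⟨φ, hφ, hφD⟩ := hκ.exists_interior
  obtain ⟨n, hn⟩ := exists_le_add_nsmul zero_mem_cone hψ (hκ.1 hφ) fun f hf =>
    (h f ((hφD f).mp hf)).le
  rw [zero_add] at hn
  refine (hκ.2.2.2 ψ hψ (n • φ - ψ) (tsub_mem_cone (nsmul_mem_cone (hκ.1 hφ) n) hψ hn) ?_).1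
  rw [add_tsub_cancel_of_le hn]
  exact hκ.nsmul_mem hφ n

lemma exists_add_eq_add_iff (hκ : IsFace P κ) {q q' : P → ℝ≥0} (hq : q ∈ cone P)
    (hq' : q' ∈ cone P) :
    (∃ k ∈ κ, ∃ k' ∈ κ, q + k = q' + k') ↔ ∀ f ∈ dualFace κ, q f = q' f := by
  refine ⟨fun ⟨k, hk, k', hk', h⟩ f hf => by simpa [hf k hk, hf k' hk'] using congrFun h f,
    fun h => ?_⟩
  obtain ⟨φ, hφ, hφD⟩ := hκ.exists_interior
  obtain ⟨n, hn⟩ := exists_le_add_nsmul hq hq' (hκ.1 hφ) fun f hf => (h f ((hφD f).mp hf)).ge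
  refine ⟨n • φ, hκ.nsmul_mem hφ n, q + n • φ - q', hκ.mem_of_forall_dualFace
    (tsub_mem_cone (add_mem_cone hq (nsmul_mem_cone (hκ.1 hφ) n)) hq' hn) fun f hf => ?_,
    (add_tsub_cancel_of_le hn).symm⟩
  simp [h f hf, hf φ hφ]

lemma eq_of_dualFace_eq {κ' : Set (P → ℝ≥0)} (hκ : IsFace P κ) (hκ' : IsFace P κ')
    (h : dualFace κ = dualFace κ') : κ = κ' := by
  ext ψ
  exact ⟨fun hψ => hκ'.mem_of_forall_dualFace (hκ.1 hψ) fun f hf => (h ▸ hf) ψ hψ,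
    fun hψ => hκ.mem_of_forall_dualFace (hκ'.1 hψ) fun f hf => (h.symm ▸ hf) ψ hψ⟩

end IsFace

section

variable {P : Type*} [AddCommMonoid P] [AddMonoid.FG P] [IsCancelAdd P]

lemma dualFace_annihilator {F : AddSubmonoid P} (hF : F.IsFace) :
    dualFace (annihilator (F : Set P)) = F := by
  refine Set.Subset.antisymm (fun f hf => ?_) fun f hf φ hφ => hφ.2 f hf
  by_contra hfF
  obtain ⟨φ, hφF, hφf⟩ := hF.exists_nnreal_hom hfF
  exact hφf (hf φ ⟨isMonHom_coe φ, fun g hg => hφF hg⟩)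

lemma mem_asympCone_annihilator {h : P → ℝ≥0∞} (hh : h ∈ extCone P) :
    h ∈ asympCone P (annihilator ((IsMonHom.toAddMonoidHom hh).finiteLocus : Set P)) := by
  set F := (IsMonHom.toAddMonoidHom hh).finiteLocus
  let g : F →+ ℝ≥0 :=
    { toFun := fun f => (h f).toNNReal
      map_zero' := by simp [hh.1]
      map_add' := fun a b => by
        simp only [AddSubmonoid.coe_add, hh.2]
        exact ENNReal.toNNReal_add a.2 b.2 }
  obtain ⟨q, hq⟩ := (IsMonHom.toAddMonoidHom hh).isFace_finiteLocus.exists_nnreal_extend g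
  have hD := dualFace_annihilator (IsMonHom.toAddMonoidHom hh).isFace_finiteLocus
  refine ⟨q, isMonHom_coe q, funext fun f => ?_⟩
  by_cases hf : f ∈ F
  · rw [infAt_of_mem (by rwa [hD]), zero_add, hq ⟨f, hf⟩]
    exact (ENNReal.coe_toNNReal hf).symm
  · rw [infAt_of_notMem (by rwa [hD]), top_add]
    exact not_not.mp hf

end

variable (P : Type*) [AddCommMonoid P]

theorem extended_cone_decomposition
    [IsCancelAdd P] (hFG : AddMonoid.FG P) :
    (∀ κ : Set (P → ℝ≥0), IsFace P κ → infAt P κ ∈ extCone P) ∧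
    (∀ h ∈ extCone P, ∃! κ : Set (P → ℝ≥0), IsFace P κ ∧ h ∈ asympCone P κ) ∧
    (∀ κ : Set (P → ℝ≥0), IsFace P κ →
      (∀ h₁ ∈ asympCone P κ, ∀ h₂ ∈ asympCone P κ, h₁ + h₂ ∈ asympCone P κ) ∧
      (∀ h ∈ asympCone P κ, infAt P κ + h = h)) ∧
    (∀ κ : Set (P → ℝ≥0), IsFace P κ →
      (∀ q ∈ cone P, ∀ q' ∈ cone P,
        (fun f => infAt P κ f + ((q + q') f : ℝ≥0∞)) =
          (fun f => infAt P κ f + (q f : ℝ≥0∞)) + (fun f => infAt P κ f + (q' f : ℝ≥0∞))) ∧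
      (∀ q ∈ cone P, ∀ q' ∈ cone P,
        ((fun f => infAt P κ f + (q f : ℝ≥0∞)) = fun f => infAt P κ f + (q' f : ℝ≥0∞)) ↔
          ∃ k ∈ κ, ∃ k' ∈ κ, q + k = q' + k')) := by
  have := hFG
  refine ⟨fun κ hκ => infAt_mem_extCone hκ.1, fun h hh => ?_, fun κ hκ => ⟨?_, ?_⟩,
    fun κ hκ => ⟨fun q _ q' _ => ?_, fun q hq q' hq' => ?_⟩⟩
  · have hF := (IsMonHom.toAddMonoidHom hh).isFace_finiteLocus
    refine ⟨_, ⟨isFace_annihilator _, mem_asympCone_annihilator hh⟩, fun κ ⟨hκ, hhκ⟩ =>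
      hκ.eq_of_dualFace_eq (isFace_annihilator _) ?_⟩
    rw [dualFace_annihilator hF, dualFace_eq_of_mem_asympCone hhκ]
    rfl
  · rintro _ ⟨q₁, hq₁, rfl⟩ _ ⟨q₂, hq₂, rfl⟩
    refine ⟨q₁ + q₂, add_mem_cone hq₁ hq₂, ?_⟩
    simp [infAt_add_add_infAt_add]
  · rintro _ ⟨q, -, rfl⟩
    funext f
    rw [Pi.add_apply, ← add_assoc, infAt_add_self]
  · simp [infAt_add_add_infAt_add]
  · rw [infAt_add_coe_eq_iff, hκ.exists_add_eq_add_iff hq hq']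

end Stmt16
end
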